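/- arXiv:2301.13033 — 9 statements merged into one kernel-verified Lean document; each statement's English description precedes it below -/
import Mathlib

section
/- Let θ̂ be a random locally finite Borel measure on [0,∞). Suppose there exists α ∈ (0,1) such that limsup_{y→∞} E[ ( y^{-3} · ∫_{[0,y]} x e^{-√2·x} θ̂(dx) )^α ] < ∞. Then the family { λ^{3/2} · ∫_{[0,∞)} x e^{-√2·x} e^{-λx²} θ̂(dx) : λ ∈ (0,1) } of real random variables is tight. -/
open MeasureTheory Filter Set

noncomputable section

/-- Tightness of a family of real random variables. -/
def TightFamily {Ω ι : Type*} [MeasurableSpace Ω] (P : Measure Ω)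
    (X : ι → Ω → ℝ) : Prop :=
  ∀ ε > (0:ℝ), ∃ M : ℝ, ∀ i, P {ω | M < |X i ω|} ≤ ENNReal.ofReal ε

/-! Slice `[0, ∞)` into the intervals `[n/√λ, (n+1)/√λ)`. On the `n`-th one the Gaussian weight
`e^{-λx²}` is at most `e^{-n²}`, so the `λ`-integral is at most `∑ₙ e^{-n²} L((n+1)/√λ)` with
`L(y) = ∫_{[0,y]} x e^{-√2x} θ̂(dx)`. As `α ≤ 1`, `(∑ aₙ)^α ≤ ∑ aₙ^α`, and the moment bound
`E[L(y)^α] ≤ C y^{3α}` for large `y` bounds the `α`-th moment of `λ^{3/2} ∫ …` by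
`C' ∑ₙ e^{-αn²} (n+1)^{3α} < ∞`, uniformly in `λ ∈ (0,1)`. Markov's inequality gives tightness. -/

open Real
open scoped ENNReal

namespace ENNReal

theorem rpow_sum_le_sum_rpow {ι : Type*} (s : Finset ι) (f : ι → ℝ≥0∞) {p : ℝ}
    (hp0 : 0 < p) (hp1 : p ≤ 1) : (∑ i ∈ s, f i) ^ p ≤ ∑ i ∈ s, f i ^ p := by
  classical
  induction s using Finset.induction_on with
  | empty => simp [zero_rpow_of_pos hp0]
  | insert a s ha ih =>
    rw [Finset.sum_insert ha, Finset.sum_insert ha]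
    exact (rpow_add_le_add_rpow _ _ hp0.le hp1).trans (add_le_add_right ih _)

theorem rpow_tsum_le_tsum_rpow {ι : Type*} (f : ι → ℝ≥0∞) {p : ℝ} (hp0 : 0 < p)
    (hp1 : p ≤ 1) : (∑' i, f i) ^ p ≤ ∑' i, f i ^ p := by
  rw [← le_rpow_inv_iff hp0, ENNReal.tsum_eq_iSup_sum]
  refine iSup_le fun s => ?_
  rw [le_rpow_inv_iff hp0]
  exact (rpow_sum_le_sum_rpow s f hp0 hp1).trans (ENNReal.sum_le_tsum s)

end ENNReal

theorem TightFamily.of_lintegral_rpow_le {Ω ι : Type*} [MeasurableSpace Ω] {P : Measure Ω}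
    {X : ι → Ω → ℝ} (Z : ι → Ω → ℝ≥0∞) (hZ : ∀ i, AEMeasurable (Z i) P)
    (hXZ : ∀ i ω, ENNReal.ofReal |X i ω| ≤ Z i ω) {α : ℝ} (hα : 0 < α) {K : ℝ≥0∞}
    (hK : K ≠ ∞) (hmom : ∀ i, ∫⁻ ω, Z i ω ^ α ∂P ≤ K) : TightFamily P X := by
  intro ε hε
  have hlim : Tendsto (fun M : ℝ => K / ENNReal.ofReal (M ^ α)) atTop (nhds 0) := by
    simpa using ENNReal.Tendsto.const_div
      (ENNReal.tendsto_ofReal_atTop.comp (tendsto_rpow_atTop hα)) (Or.inr hK)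
  obtain ⟨M, hMε, hM⟩ :=
    ((hlim.eventually (gt_mem_nhds (ENNReal.ofReal_pos.2 hε))).and (eventually_gt_atTop 0)).exists
  have hMα : ENNReal.ofReal (M ^ α) = ENNReal.ofReal M ^ α :=
    (ENNReal.ofReal_rpow_of_nonneg hM.le hα.le).symm
  refine ⟨M, fun i => ?_⟩
  calc P {ω | M < |X i ω|} ≤ P {ω | ENNReal.ofReal (M ^ α) ≤ Z i ω ^ α} := by
        refine measure_mono fun ω hω => ?_
        rw [hMα]
        exact ENNReal.rpow_le_rpow ((ENNReal.ofReal_le_ofReal hω.le).trans (hXZ i ω)) hα.le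
    _ ≤ (∫⁻ ω, Z i ω ^ α ∂P) / ENNReal.ofReal (M ^ α) :=
        meas_ge_le_lintegral_div ((hZ i).pow_const α)
          (ENNReal.ofReal_pos.2 (rpow_pos_of_pos hM α)).ne' ENNReal.ofReal_ne_top
    _ ≤ K / ENNReal.ofReal (M ^ α) := ENNReal.div_le_div_right (hmom i) _
    _ ≤ ENNReal.ofReal ε := hMε.le

theorem summable_exp_neg_sq_mul_add_one_rpow_rpow {k α : ℝ} (hk : 0 ≤ k) (hα : 0 < α) :
    Summable fun n : ℕ => (exp (-(n : ℝ) ^ 2) * ((n : ℝ) + 1) ^ k) ^ α := by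
  refine ((summable_exp_nat_mul_iff.2 (neg_lt_zero.2 hα)).mul_left
    (exp ((k + 1) ^ 2 / 4 * α))).of_nonneg_of_le (fun n => by positivity) fun n => ?_
  have hpoly : ((n : ℝ) + 1) ^ k ≤ exp (n * k) := by
    rw [exp_mul]
    exact rpow_le_rpow (by positivity) (by linarith [add_one_le_exp (n : ℝ)]) hk
  have hquad : (n * k - (n : ℝ) ^ 2) * α ≤ (k + 1) ^ 2 / 4 * α + n * -α := by
    nlinarith [sq_nonneg ((n : ℝ) - (k + 1) / 2)]
  calc (exp (-(n : ℝ) ^ 2) * ((n : ℝ) + 1) ^ k) ^ α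
      ≤ exp (n * k - (n : ℝ) ^ 2) ^ α := by
        rw [sub_eq_neg_add, exp_add]
        gcongr
    _ ≤ exp ((k + 1) ^ 2 / 4 * α) * exp (n * -α) := by
        rw [← exp_mul, ← exp_add]
        exact exp_le_exp.2 hquad

theorem Measurable.setLIntegral_measure {Ω X : Type*} [MeasurableSpace Ω] [MeasurableSpace X]
    {θ : Ω → Measure X} (hθ : Measurable θ) {f : X → ℝ≥0∞} (hf : Measurable f) {s : Set X}
    (hs : MeasurableSet s) : Measurable fun ω => ∫⁻ x in s, f x ∂(θ ω) := by
  simp_rw [← lintegral_indicator hs]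
  exact (Measure.measurable_lintegral (hf.indicator hs)).comp hθ

theorem lintegral_Ici_mul_exp_neg_mul_sq_le_tsum (μ : Measure ℝ) {f : ℝ → ℝ≥0∞}
    (hf : Measurable f) {t : ℝ} (ht : 0 < t) :
    ∫⁻ x in Ici 0, f x * ENNReal.ofReal (exp (-t * x ^ 2)) ∂μ ≤
      ∑' n : ℕ, ENNReal.ofReal (exp (-(n : ℝ) ^ 2)) * ∫⁻ x in Icc 0 ((n + 1) / √t), f x ∂μ := by
  have hslice : ∀ x ∈ Ici (0 : ℝ), f x * ENNReal.ofReal (exp (-t * x ^ 2)) ≤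
      ∑' n : ℕ, (Icc 0 (((n : ℝ) + 1) / √t)).indicator
        (fun x => ENNReal.ofReal (exp (-(n : ℝ) ^ 2)) * f x) x := by
    intro x hx
    set n := ⌊√t * x⌋₊
    have hn : (n : ℝ) ≤ √t * x := Nat.floor_le (by positivity [mem_Ici.1 hx])
    have hxn : x ∈ Icc 0 (((n : ℝ) + 1) / √t) := by
      refine ⟨hx, ?_⟩
      rw [le_div_iff₀ (sqrt_pos.2 ht)]
      linarith [Nat.lt_floor_add_one (√t * x)]
    refine le_trans ?_ (ENNReal.le_tsum n)
    rw [indicator_of_mem hxn, mul_comm]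
    have hsq : (n : ℝ) ^ 2 ≤ t * x ^ 2 := by
      calc (n : ℝ) ^ 2 ≤ (√t * x) ^ 2 := pow_le_pow_left₀ n.cast_nonneg hn 2
        _ = t * x ^ 2 := by rw [mul_pow, sq_sqrt ht.le]
    gcongr
    linarith
  calc ∫⁻ x in Ici 0, f x * ENNReal.ofReal (exp (-t * x ^ 2)) ∂μ
      ≤ ∫⁻ x in Ici 0, ∑' n : ℕ, (Icc 0 (((n : ℝ) + 1) / √t)).indicator
          (fun x => ENNReal.ofReal (exp (-(n : ℝ) ^ 2)) * f x) x ∂μ :=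
        setLIntegral_mono' measurableSet_Ici hslice
    _ ≤ ∫⁻ x, ∑' n : ℕ, (Icc 0 (((n : ℝ) + 1) / √t)).indicator
          (fun x => ENNReal.ofReal (exp (-(n : ℝ) ^ 2)) * f x) x ∂μ :=
        setLIntegral_le_lintegral _ _
    _ = ∑' n : ℕ, ENNReal.ofReal (exp (-(n : ℝ) ^ 2)) * ∫⁻ x in Icc 0 ((n + 1) / √t), f x ∂μ := by
        rw [lintegral_tsum fun n => ((hf.const_mul _).indicator measurableSet_Icc).aemeasurable]
        simp_rw [lintegral_indicator measurableSet_Icc, lintegral_const_mul _ hf]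

theorem ofReal_setIntegral_eq_setLIntegral_enorm {μ : Measure ℝ} [IsFiniteMeasureOnCompacts μ]
    {g : ℝ → ℝ} {s : Set ℝ} (hg : ContinuousOn g s) (hs : IsCompact s) (hsm : MeasurableSet s)
    (hg0 : ∀ x ∈ s, 0 ≤ g x) :
    ENNReal.ofReal (∫ x in s, g x ∂μ) = ∫⁻ x in s, ‖g x‖ₑ ∂μ := by
  rw [ofReal_integral_eq_lintegral_ofReal (hg.integrableOn_compact hs)
    ((ae_restrict_mem hsm).mono hg0)]
  exact setLIntegral_congr_fun hsm fun x hx => (Real.enorm_of_nonneg (hg0 x hx)).symm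

theorem Real.rpow_eq_rpow_mul_rpow_neg_mul {y b : ℝ} (hy : 0 < y) (hb : 0 ≤ b) (k α : ℝ) :
    b ^ α = (y ^ k) ^ α * (y ^ (-k) * b) ^ α := by
  rw [← mul_rpow (by positivity) (by positivity), ← mul_assoc, ← rpow_add hy, add_neg_cancel,
    rpow_zero, one_mul]

theorem exists_lintegral_rpow_setLIntegral_Icc_le {Ω : Type*} [MeasurableSpace Ω]
    {P : Measure Ω} {θ : Ω → Measure ℝ} [∀ ω, IsFiniteMeasureOnCompacts (θ ω)] {g : ℝ → ℝ}
    (hg : Continuous g) (hg0 : ∀ x, 0 ≤ x → 0 ≤ g x) {k α : ℝ} (hα : 0 ≤ α)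
    (hmom : limsup (fun y : ℝ => ∫⁻ ω, ENNReal.ofReal
      ((y ^ (-k) * ∫ x in Icc 0 y, g x ∂(θ ω)) ^ α) ∂P) atTop < ∞) :
    ∃ C ≠ ∞, ∃ Y ≥ (1 : ℝ), ∀ y ≥ Y,
      ∫⁻ ω, (∫⁻ x in Icc 0 y, ‖g x‖ₑ ∂(θ ω)) ^ α ∂P ≤ ENNReal.ofReal (y ^ k) ^ α * C := by
  obtain ⟨C, hlim, hC⟩ := exists_between hmom
  obtain ⟨Y, hY⟩ := eventually_atTop.1 (eventually_lt_of_limsup_lt hlim)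
  refine ⟨C, hC.ne, max Y 1, le_max_right _ _, fun y hy => ?_⟩
  have hy0 : 0 < y := one_pos.trans_le ((le_max_right _ _).trans hy)
  have hrescale : ∀ ω, (∫⁻ x in Icc 0 y, ‖g x‖ₑ ∂(θ ω)) ^ α = ENNReal.ofReal (y ^ k) ^ α *
      ENNReal.ofReal ((y ^ (-k) * ∫ x in Icc 0 y, g x ∂(θ ω)) ^ α) := by
    intro ω
    have hB : 0 ≤ ∫ x in Icc 0 y, g x ∂(θ ω) :=
      setIntegral_nonneg measurableSet_Icc fun x hx => hg0 x hx.1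
    rw [← ofReal_setIntegral_eq_setLIntegral_enorm hg.continuousOn isCompact_Icc
        measurableSet_Icc fun x hx => hg0 x hx.1,
      ENNReal.ofReal_rpow_of_nonneg hB hα, ENNReal.ofReal_rpow_of_nonneg (by positivity) hα,
      ← ENNReal.ofReal_mul (by positivity), Real.rpow_eq_rpow_mul_rpow_neg_mul hy0 hB k α]
  simp_rw [hrescale]
  rw [lintegral_const_mul' _ _ (ENNReal.rpow_ne_top_of_nonneg hα ENNReal.ofReal_ne_top)]
  exact mul_le_mul_right (hY y ((le_max_left _ _).trans hy)).le _

theorem Real.rpow_div_two_mul_mul_div_sqrt_rpow {t : ℝ} (ht : 0 < t) {Y a m : ℝ} (hY : 0 ≤ Y)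
    (hm : 0 ≤ m) (k : ℝ) : t ^ (k / 2) * a * (Y * (m / √t)) ^ k = Y ^ k * (a * m ^ k) := by
  have hsqrt : 0 < √t ^ k := rpow_pos_of_pos (sqrt_pos.2 ht) k
  rw [rpow_div_two_eq_sqrt k ht.le, mul_rpow hY (div_nonneg hm (sqrt_nonneg t)),
    div_rpow hm (sqrt_nonneg t)]
  field_simp

section MomentScaling

variable {Ω : Type*} [MeasurableSpace Ω] {P : Measure Ω} {F : Ω → ℝ → ℝ≥0∞} {k α Y t : ℝ}
  {C : ℝ≥0∞}

theorem lintegral_rpow_mul_le_of_moment (hmono : ∀ ω, Monotone (F ω)) (hα : 0 ≤ α)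
    (hY : 1 ≤ Y) (hmom : ∀ y ≥ Y, ∫⁻ ω, F ω y ^ α ∂P ≤ ENNReal.ofReal (y ^ k) ^ α * C)
    (ht0 : 0 < t) (ht1 : t ≤ 1) {a m : ℝ} (ha : 0 ≤ a) (hm : 1 ≤ m) :
    ∫⁻ ω, (ENNReal.ofReal (t ^ (k / 2)) * (ENNReal.ofReal a * F ω (m / √t))) ^ α ∂P ≤
      ENNReal.ofReal ((Y ^ k) ^ α * (a * m ^ k) ^ α) * C := by
  have hm_le : 1 ≤ m / √t := by
    rw [le_div_iff₀ (sqrt_pos.2 ht0), one_mul]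
    exact (sqrt_le_one.2 ht1).trans hm
  set y := Y * (m / √t)
  have hYy : Y ≤ y := le_mul_of_one_le_right (by linarith) hm_le
  have hFy : ∀ ω, F ω (m / √t) ^ α ≤ F ω y ^ α := fun ω =>
    ENNReal.rpow_le_rpow (hmono ω (le_mul_of_one_le_left (by linarith) hY)) hα
  calc ∫⁻ ω, (ENNReal.ofReal (t ^ (k / 2)) * (ENNReal.ofReal a * F ω (m / √t))) ^ α ∂P
      = ∫⁻ ω, (ENNReal.ofReal (t ^ (k / 2)) * ENNReal.ofReal a) ^ α * F ω (m / √t) ^ α ∂P := by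
        simp_rw [← mul_assoc, ENNReal.mul_rpow_of_nonneg _ _ hα]
    _ = (ENNReal.ofReal (t ^ (k / 2)) * ENNReal.ofReal a) ^ α * ∫⁻ ω, F ω (m / √t) ^ α ∂P :=
        lintegral_const_mul' _ _ (ENNReal.rpow_ne_top_of_nonneg hα
          (ENNReal.mul_ne_top ENNReal.ofReal_ne_top ENNReal.ofReal_ne_top))
    _ ≤ (ENNReal.ofReal (t ^ (k / 2)) * ENNReal.ofReal a) ^ α *
          (ENNReal.ofReal (y ^ k) ^ α * C) :=
        mul_le_mul_right ((lintegral_mono hFy).trans (hmom y hYy)) _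
    _ = ENNReal.ofReal ((Y ^ k) ^ α * (a * m ^ k) ^ α) * C := by
        rw [← mul_assoc, ← ENNReal.mul_rpow_of_nonneg _ _ hα,
          ← ENNReal.ofReal_mul (by positivity), ← ENNReal.ofReal_mul (by positivity),
          rpow_div_two_mul_mul_div_sqrt_rpow ht0 (by linarith) (by linarith) k,
          ENNReal.ofReal_rpow_of_nonneg (by positivity) hα,
          mul_rpow (by positivity) (by positivity)]

theorem lintegral_rpow_tsum_le_of_moment (hF : ∀ y, Measurable fun ω => F ω y)
    (hmono : ∀ ω, Monotone (F ω)) (hk : 0 ≤ k) (hα0 : 0 < α) (hα1 : α ≤ 1) (hY : 1 ≤ Y)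
    (hmom : ∀ y ≥ Y, ∫⁻ ω, F ω y ^ α ∂P ≤ ENNReal.ofReal (y ^ k) ^ α * C)
    (ht0 : 0 < t) (ht1 : t ≤ 1) :
    ∫⁻ ω, (ENNReal.ofReal (t ^ (k / 2)) *
        ∑' n : ℕ, ENNReal.ofReal (exp (-(n : ℝ) ^ 2)) * F ω ((n + 1) / √t)) ^ α ∂P ≤
      ENNReal.ofReal (∑' n : ℕ, (Y ^ k) ^ α * (exp (-(n : ℝ) ^ 2) * ((n : ℝ) + 1) ^ k) ^ α) *
        C := by
  calc ∫⁻ ω, (ENNReal.ofReal (t ^ (k / 2)) *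
        ∑' n : ℕ, ENNReal.ofReal (exp (-(n : ℝ) ^ 2)) * F ω ((n + 1) / √t)) ^ α ∂P
      ≤ ∫⁻ ω, ∑' n : ℕ, (ENNReal.ofReal (t ^ (k / 2)) *
          (ENNReal.ofReal (exp (-(n : ℝ) ^ 2)) * F ω ((n + 1) / √t))) ^ α ∂P :=
        lintegral_mono fun ω => by
          rw [← ENNReal.tsum_mul_left]
          exact ENNReal.rpow_tsum_le_tsum_rpow _ hα0 hα1
    _ = ∑' n : ℕ, ∫⁻ ω, (ENNReal.ofReal (t ^ (k / 2)) *
          (ENNReal.ofReal (exp (-(n : ℝ) ^ 2)) * F ω ((n + 1) / √t))) ^ α ∂P :=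
        lintegral_tsum fun n => ((((hF _).const_mul _).const_mul _).pow_const _).aemeasurable
    _ ≤ ∑' n : ℕ, ENNReal.ofReal
          ((Y ^ k) ^ α * (exp (-(n : ℝ) ^ 2) * ((n : ℝ) + 1) ^ k) ^ α) * C :=
        ENNReal.tsum_le_tsum fun n => lintegral_rpow_mul_le_of_moment hmono hα0.le hY hmom ht0 ht1
          (exp_pos _).le (by linarith [n.cast_nonneg (α := ℝ)])
    _ = _ := by
        rw [ENNReal.tsum_mul_right, ENNReal.ofReal_tsum_of_nonneg (fun n => by positivity)
          ((summable_exp_neg_sq_mul_add_one_rpow_rpow hk hα0).mul_left _)]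

end MomentScaling

theorem ofReal_abs_mul_integral_le_mul_lintegral_enorm {X : Type*} [MeasurableSpace X]
    (μ : Measure X) {c : ℝ} (hc : 0 ≤ c) (f : X → ℝ) :
    ENNReal.ofReal |c * ∫ x, f x ∂μ| ≤ ENNReal.ofReal c * ∫⁻ x, ‖f x‖ₑ ∂μ := by
  rw [abs_mul, abs_of_nonneg hc, ENNReal.ofReal_mul hc, ← Real.enorm_eq_ofReal_abs]
  exact mul_le_mul_right (enorm_integral_le_lintegral_enorm f) _

theorem tightness_from_fractional_moment_general
    {Ω : Type*} [MeasurableSpace Ω] (P : Measure Ω)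
    (θ : Ω → Measure ℝ) (hmeas : Measurable θ)
    (hloc : ∀ ω, IsLocallyFiniteMeasure (θ ω))
    (α : ℝ) (hα : α ∈ Set.Ioo (0:ℝ) 1)
    (hmom : Filter.limsup
      (fun y : ℝ => ∫⁻ ω, ENNReal.ofReal
        ((y ^ (-(3:ℝ)) *
          ∫ x in Set.Icc (0:ℝ) y, x * Real.exp (-(Real.sqrt 2) * x) ∂(θ ω)) ^ α) ∂P)
      atTop < ⊤) :
    TightFamily P (fun l : Set.Ioo (0:ℝ) 1 => fun ω =>
      (l : ℝ) ^ ((3:ℝ)/2) * ∫ x in Set.Ici (0:ℝ),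
        x * Real.exp (-(Real.sqrt 2) * x) * Real.exp (-(l:ℝ) * x ^ 2) ∂(θ ω)) := by
  obtain ⟨hα0, hα1⟩ := hα
  set g : ℝ → ℝ := fun x => x * exp (-√2 * x)
  have hg : Continuous g := by fun_prop
  have : ∀ ω, IsFiniteMeasureOnCompacts (θ ω) := fun ω => have := hloc ω; inferInstance
  obtain ⟨C, hC, Y, hY, hYmom⟩ := exists_lintegral_rpow_setLIntegral_Icc_le (P := P) hg
    (fun x hx => by positivity) hα0.le hmom
  have hF : ∀ y, Measurable fun ω => ∫⁻ x in Icc 0 y, ‖g x‖ₑ ∂(θ ω) := fun y =>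
    hmeas.setLIntegral_measure hg.measurable.enorm measurableSet_Icc
  have hmono : ∀ ω, Monotone fun y => ∫⁻ x in Icc 0 y, ‖g x‖ₑ ∂(θ ω) := fun ω _ _ hyz =>
    lintegral_mono_set (Icc_subset_Icc_right hyz)
  refine TightFamily.of_lintegral_rpow_le (K := ENNReal.ofReal (∑' n : ℕ,
      (Y ^ (3:ℝ)) ^ α * (exp (-(n : ℝ) ^ 2) * ((n : ℝ) + 1) ^ (3:ℝ)) ^ α) * C)
    (fun l ω => ENNReal.ofReal ((l : ℝ) ^ ((3:ℝ)/2)) *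
      ∫⁻ x in Ici 0, ‖g x‖ₑ * ENNReal.ofReal (exp (-(l : ℝ) * x ^ 2)) ∂(θ ω))
    (fun l =>
      ((hmeas.setLIntegral_measure (by fun_prop) measurableSet_Ici).const_mul _).aemeasurable)
    (fun l ω => ?_) hα0
    (ENNReal.mul_ne_top ENNReal.ofReal_ne_top hC) (fun l => ?_)
  · refine (ofReal_abs_mul_integral_le_mul_lintegral_enorm _ (rpow_nonneg l.2.1.le _) _).trans_eq ?_
    congr 1
    refine lintegral_congr fun x => ?_
    rw [enorm_mul, Real.enorm_of_nonneg (exp_pos _).le]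
  · obtain ⟨hl0, hl1⟩ := l.2
    refine le_trans (lintegral_mono fun ω => ENNReal.rpow_le_rpow (mul_le_mul_right
      (lintegral_Ici_mul_exp_neg_mul_sq_le_tsum _ hg.measurable.enorm hl0) _) hα0.le) ?_
    exact lintegral_rpow_tsum_le_of_moment hF hmono (by norm_num) hα0 hα1.le hY hYmom hl0 hl1.le

/-- A fractional moment bound on `y⁻³ ∫_{[0,y]} x e^{-√2 x} θ̂(dx)` implies tightness of
`λ^{3/2} ∫_{[0,∞)} x e^{-√2 x} e^{-λx²} θ̂(dx)` for `λ ∈ (0,1)`. -/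
theorem tightness_from_fractional_moment
    {Ω : Type*} [MeasurableSpace Ω] (P : Measure Ω) [IsProbabilityMeasure P]
    (θ : Ω → Measure ℝ) (hmeas : Measurable θ)
    (hloc : ∀ ω, IsLocallyFiniteMeasure (θ ω))
    (hsupp : ∀ ω, θ ω (Set.Iio 0) = 0)
    (α : ℝ) (hα : α ∈ Set.Ioo (0:ℝ) 1)
    (hmom : Filter.limsup
      (fun y : ℝ => ∫⁻ ω, ENNReal.ofReal
        ((y ^ (-(3:ℝ)) *
          ∫ x in Set.Icc (0:ℝ) y, x * Real.exp (-(Real.sqrt 2) * x) ∂(θ ω)) ^ α) ∂P)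
      atTop < ⊤) :
    TightFamily P (fun l : Set.Ioo (0:ℝ) 1 => fun ω =>
      (l : ℝ) ^ ((3:ℝ)/2) * ∫ x in Set.Ici (0:ℝ),
        x * Real.exp (-(Real.sqrt 2) * x) * Real.exp (-(l:ℝ) * x ^ 2) ∂(θ ω)) :=
  tightness_from_fractional_moment_general P θ hmeas hloc α hα hmom

end
end

section
/- Let β be a random locally finite Borel measure on [0,∞) such that the family { λ^{3/2} · ∫_{[0,∞)} √x · e^{-λx} β(dx) : λ ∈ (0,1) } of real random variables is tight. Then: (a) for every α > 1 the family { (log(1/λ))^α · λ^{3/2} · ∫_{[0,∞)} e^{-λx} β(dx) : λ ∈ (0, 1/e) } is tight; (b) consequently, log(1/λ) · λ^{3/2} · ∫_{[0,∞)} e^{-λx} β(dx) → 0 in probability as λ → 0+. -/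
/-!
Write `G(s) = ∫ e^{-sx} dβ` and `F(s) = ∫ √x e^{-sx} dβ` over `[0, ∞)`. Splitting according
to `x < 1`, `t x ≤ 1` and `t x > 1` gives
`e^{-sx} ≤ 1_{[0,1)}(x) + e √x e^{-tx} + √t √x e^{-sx}`, hence `G(s) ≤ β[0,1) + e F(t) + √t F(s)`.
Off an event of small probability, tightness bounds `β[0,1)`, `F(t) ≤ M t^{-3/2}` and
`F(s) ≤ M s^{-3/2}`, so that with `L = log (1/s)`
`L^α s^{3/2} G(s) ≤ L^α s^{3/2} β[0,1) + e M L^α (s/t)^{3/2} + M L^α √t`.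
The choice `t = min (s L^{2α/3}) (1/2)` keeps `L^α (s/t)^{3/2}` bounded, and
`L^α √t ≤ L^{4α/3} √s = L^{4α/3} e^{-L/2}` is bounded as well. Part (b) is part (a) for
`α = 2`, the extra factor `L` tending to infinity.
-/

open MeasureTheory Filter Set

noncomputable section

def ConvInProb {Ω ι : Type*} [MeasurableSpace Ω] (P : Measure Ω) (l : Filter ι)
    (X : ι → Ω → ℝ) (c : ℝ) : Prop :=
  ∀ ε > (0:ℝ), Tendsto (fun i => P {ω | ε < |X i ω - c|}) l (nhds 0)

open scoped ENNReal Topology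

namespace LogGain

def laplace (ρ : Measure ℝ) (t : ℝ) : ℝ≥0∞ :=
  ∫⁻ x in Ici 0, ENNReal.ofReal (Real.exp (-t * x)) ∂ρ

def sqrtLaplace (ρ : Measure ℝ) (t : ℝ) : ℝ≥0∞ :=
  ∫⁻ x in Ici 0, ENNReal.ofReal (Real.sqrt x * Real.exp (-t * x)) ∂ρ

section OneMeasure

variable (ρ : Measure ℝ)

theorem integral_exp_eq_toReal_laplace (t : ℝ) :
    ∫ x in Ici 0, Real.exp (-t * x) ∂ρ = (laplace ρ t).toReal :=
  integral_eq_lintegral_of_nonneg_ae (ae_of_all _ fun _ => (Real.exp_pos _).le)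
    (by fun_prop : Continuous fun x => Real.exp (-t * x)).aestronglyMeasurable

theorem integral_sqrt_mul_exp_eq_toReal_sqrtLaplace (t : ℝ) :
    ∫ x in Ici 0, Real.sqrt x * Real.exp (-t * x) ∂ρ = (sqrtLaplace ρ t).toReal :=
  integral_eq_lintegral_of_nonneg_ae
    (ae_of_all _ fun _ => mul_nonneg (Real.sqrt_nonneg _) (Real.exp_pos _).le)
    (by fun_prop : Continuous fun x => Real.sqrt x * Real.exp (-t * x)).aestronglyMeasurable

theorem tendsto_sqrtLaplace {u : ℕ → ℝ} {t : ℝ} (hu : Antitone u)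
    (hlim : Tendsto u atTop (𝓝 t)) :
    Tendsto (fun n => sqrtLaplace ρ (u n)) atTop (𝓝 (sqrtLaplace ρ t)) := by
  refine lintegral_tendsto_of_tendsto_of_monotone (fun n => by fun_prop)
    ((ae_restrict_iff' measurableSet_Ici).2 (ae_of_all _ fun x (hx : 0 ≤ x) m n hmn => ?_))
    (ae_of_all _ fun x => ?_)
  · exact ENNReal.ofReal_le_ofReal <| mul_le_mul_of_nonneg_left
      (Real.exp_le_exp.2 (by nlinarith [hu hmn])) (Real.sqrt_nonneg x)
  · exact (ENNReal.continuous_ofReal.tendsto _).comp <|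
      tendsto_const_nhds.mul (Real.continuous_exp.continuousAt.tendsto.comp
        ((hlim.neg).mul_const x))

theorem sqrt_mul_exp_neg_mul_le {d x : ℝ} (hd : 0 < d) (hx : 0 ≤ x) :
    Real.sqrt x * Real.exp (-d * x) ≤ 1 + 1 / d := by
  have hsqrt : Real.sqrt x ≤ 1 + x := Real.sqrt_le_iff.2 ⟨by positivity, by nlinarith⟩
  have hexp : Real.exp (-d * x) ≤ 1 := Real.exp_le_one_iff.2 (by nlinarith)
  have hdx : d * x * Real.exp (-d * x) ≤ 1 := by
    calc d * x * Real.exp (-d * x) ≤ Real.exp (d * x) * Real.exp (-d * x) := by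
          gcongr; linarith [Real.add_one_le_exp (d * x)]
      _ = 1 := by rw [← Real.exp_add]; simp
  have hx' : x * Real.exp (-d * x) ≤ 1 / d := by
    rw [le_div_iff₀ hd]; linarith
  nlinarith [Real.exp_pos (-d * x)]

theorem sqrtLaplace_le_mul_laplace {s t : ℝ} (hst : s < t) :
    sqrtLaplace ρ t ≤ ENNReal.ofReal (1 + 1 / (t - s)) * laplace ρ s := by
  rw [laplace, ← lintegral_const_mul' _ _ ENNReal.ofReal_ne_top]
  refine setLIntegral_mono' measurableSet_Ici fun x (hx : 0 ≤ x) => ?_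
  rw [← ENNReal.ofReal_mul (by positivity)]
  refine ENNReal.ofReal_le_ofReal ?_
  calc Real.sqrt x * Real.exp (-t * x)
      = (Real.sqrt x * Real.exp (-(t - s) * x)) * Real.exp (-s * x) := by
        rw [mul_assoc, ← Real.exp_add]; ring_nf
    _ ≤ (1 + 1 / (t - s)) * Real.exp (-s * x) := by
        gcongr; exact sqrt_mul_exp_neg_mul_le (sub_pos.2 hst) hx

theorem sqrtLaplace_lt_top {s t : ℝ} (hst : s < t) (h : laplace ρ s < ⊤) :
    sqrtLaplace ρ t < ⊤ :=
  (sqrtLaplace_le_mul_laplace ρ hst).trans_lt (ENNReal.mul_lt_top ENNReal.ofReal_lt_top h)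

theorem exp_neg_mul_le {s t x : ℝ} (hs : 0 ≤ s) (hx : 0 ≤ x) :
    Real.exp (-s * x) ≤ (Ico 0 1).indicator 1 x
      + Real.exp 1 * (Real.sqrt x * Real.exp (-t * x))
      + Real.sqrt t * (Real.sqrt x * Real.exp (-s * x)) := by
  have hexp : Real.exp (-s * x) ≤ 1 := Real.exp_le_one_iff.2 (by nlinarith)
  have h₁ : 0 ≤ Real.exp 1 * (Real.sqrt x * Real.exp (-t * x)) := by positivity
  have h₂ : 0 ≤ Real.sqrt t * (Real.sqrt x * Real.exp (-s * x)) := by positivity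
  rcases lt_or_ge x 1 with hx1 | hx1
  · rw [indicator_of_mem (show x ∈ Ico 0 1 from ⟨hx, hx1⟩), Pi.one_apply]; linarith
  rw [indicator_of_notMem fun h => (not_lt.2 hx1) h.2]
  have hsqrtx : 1 ≤ Real.sqrt x := Real.one_le_sqrt.2 hx1
  rcases le_or_gt (t * x) 1 with htx | htx
  · have : 1 ≤ Real.exp 1 * Real.exp (-t * x) := by
      rw [← Real.exp_add]; exact Real.one_le_exp (by linarith)
    nlinarith [Real.exp_pos 1, Real.exp_pos (-t * x)]
  · have : 1 ≤ Real.sqrt t * Real.sqrt x := by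
      rw [← Real.sqrt_mul' _ hx]; exact Real.one_le_sqrt.2 htx.le
    nlinarith [Real.exp_pos (-s * x)]

theorem laplace_le {s : ℝ} (hs : 0 ≤ s) (t : ℝ) :
    laplace ρ s ≤ ρ (Ico 0 1) + ENNReal.ofReal (Real.exp 1) * sqrtLaplace ρ t
      + ENNReal.ofReal (Real.sqrt t) * sqrtLaplace ρ s := by
  calc laplace ρ s
      ≤ ∫⁻ x in Ici 0, ((Ico 0 1).indicator 1 x
          + ENNReal.ofReal (Real.exp 1) * ENNReal.ofReal (Real.sqrt x * Real.exp (-t * x))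
          + ENNReal.ofReal (Real.sqrt t) * ENNReal.ofReal (Real.sqrt x * Real.exp (-s * x)))
          ∂ρ := by
        refine setLIntegral_mono' measurableSet_Ici fun x (hx : 0 ≤ x) => ?_
        refine (ENNReal.ofReal_le_ofReal (exp_neg_mul_le (t := t) hs hx)).trans_eq ?_
        have hind : (0 : ℝ) ≤ (Ico 0 1).indicator 1 x :=
          indicator_nonneg (fun _ _ => zero_le_one) x
        rw [ENNReal.ofReal_add (by positivity) (by positivity),
          ENNReal.ofReal_add hind (by positivity),
          ENNReal.ofReal_mul (by positivity), ENNReal.ofReal_mul (by positivity)]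
        simp only [indicator, Pi.one_apply]
        split_ifs <;> simp
    _ = ρ (Ico 0 1) + ENNReal.ofReal (Real.exp 1) * sqrtLaplace ρ t
          + ENNReal.ofReal (Real.sqrt t) * sqrtLaplace ρ s := by
        rw [lintegral_add_right _ (by fun_prop), lintegral_add_left (by measurability),
          lintegral_indicator_one measurableSet_Ico, Measure.restrict_apply measurableSet_Ico,
          Ico_inter_Ici, max_self, sqrtLaplace, sqrtLaplace,
          lintegral_const_mul' _ _ ENNReal.ofReal_ne_top,
          lintegral_const_mul' _ _ ENNReal.ofReal_ne_top]

theorem mul_toReal_laplace_le {a s t C N M : ℝ} (hs : 0 < s) (ht : 0 ≤ t)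
    (ha : 0 ≤ a) (hN : 0 ≤ N) (hM : 0 ≤ M) (h₁ : a * s ^ ((3:ℝ)/2) ≤ C)
    (h₂ : a * s ^ ((3:ℝ)/2) / t ^ ((3:ℝ)/2) ≤ C) (h₃ : a * Real.sqrt t ≤ C)
    (hZ : ρ (Ico 0 1) ≤ ENNReal.ofReal N)
    (hFt : sqrtLaplace ρ t ≤ ENNReal.ofReal (M / t ^ ((3:ℝ)/2)))
    (hFs : sqrtLaplace ρ s ≤ ENNReal.ofReal (M / s ^ ((3:ℝ)/2))) :
    a * s ^ ((3:ℝ)/2) * (laplace ρ s).toReal ≤ C * (N + Real.exp 1 * M + M) := by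
  have hMt : 0 ≤ M / t ^ ((3:ℝ)/2) := div_nonneg hM (Real.rpow_nonneg ht _)
  have hMs : 0 ≤ M / s ^ ((3:ℝ)/2) := div_nonneg hM (by positivity)
  set B := N + Real.exp 1 * (M / t ^ ((3:ℝ)/2)) + Real.sqrt t * (M / s ^ ((3:ℝ)/2))
  have hB : 0 ≤ B := by positivity
  have hG : laplace ρ s ≤ ENNReal.ofReal B :=
    calc laplace ρ s ≤ ρ (Ico 0 1) + ENNReal.ofReal (Real.exp 1) * sqrtLaplace ρ t
          + ENNReal.ofReal (Real.sqrt t) * sqrtLaplace ρ s := laplace_le ρ hs.le t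
      _ ≤ ENNReal.ofReal N + ENNReal.ofReal (Real.exp 1) * ENNReal.ofReal (M / t ^ ((3:ℝ)/2))
          + ENNReal.ofReal (Real.sqrt t) * ENNReal.ofReal (M / s ^ ((3:ℝ)/2)) := by gcongr
      _ = ENNReal.ofReal B := by
        rw [← ENNReal.ofReal_mul (by positivity), ← ENNReal.ofReal_mul (by positivity),
          ← ENNReal.ofReal_add hN (by positivity),
          ← ENNReal.ofReal_add (by positivity) (by positivity)]
  calc a * s ^ ((3:ℝ)/2) * (laplace ρ s).toReal ≤ a * s ^ ((3:ℝ)/2) * B := by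
        gcongr; exact ENNReal.toReal_le_of_le_ofReal hB hG
    _ = a * s ^ ((3:ℝ)/2) * N + Real.exp 1 * M * (a * s ^ ((3:ℝ)/2) / t ^ ((3:ℝ)/2))
          + a * Real.sqrt t * M := by
        simp only [B]; field_simp
    _ ≤ C * N + Real.exp 1 * M * C + C * M := by gcongr
    _ = C * (N + Real.exp 1 * M + M) := by ring

end OneMeasure

section Deterministic

theorem rpow_mul_exp_neg_half_le {p L : ℝ} (hp : 0 < p) (hL : 0 ≤ L) :
    L ^ p * Real.exp (-(L / 2)) ≤ (2 * p) ^ p := by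
  have hx : L / (2 * p) ≤ Real.exp (L / (2 * p) - 1) := by
    linarith [Real.add_one_le_exp (L / (2 * p) - 1)]
  have hrpow : (L / (2 * p)) ^ p ≤ Real.exp (L / 2 - p) :=
    calc (L / (2 * p)) ^ p ≤ Real.exp (L / (2 * p) - 1) ^ p :=
          Real.rpow_le_rpow (by positivity) hx hp.le
      _ = Real.exp (L / 2 - p) := by
          rw [← Real.exp_mul]; congr 1; field_simp
  have hsplit : L ^ p = (2 * p) ^ p * (L / (2 * p)) ^ p := by
    rw [← Real.mul_rpow (by positivity) (by positivity), mul_div_cancel₀ _ (by positivity)]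
  calc L ^ p * Real.exp (-(L / 2)) = (2 * p) ^ p * ((L / (2 * p)) ^ p * Real.exp (-(L / 2))) := by
        rw [hsplit]; ring
    _ ≤ (2 * p) ^ p * (Real.exp (L / 2 - p) * Real.exp (-(L / 2))) := by gcongr
    _ = (2 * p) ^ p * Real.exp (-p) := by rw [← Real.exp_add]; ring_nf
    _ ≤ (2 * p) ^ p :=
        mul_le_of_le_one_right (by positivity) (Real.exp_le_one_iff.2 (by linarith))

theorem log_one_div_rpow_mul_sqrt_le {p s : ℝ} (hp : 0 < p) (hs0 : 0 < s) (hs1 : s ≤ 1) :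
    Real.log (1 / s) ^ p * Real.sqrt s ≤ (2 * p) ^ p := by
  have hsqrt : Real.sqrt s = Real.exp (-(Real.log (1 / s) / 2)) := by
    rw [one_div, Real.log_inv, Real.sqrt_eq_rpow, Real.rpow_def_of_pos hs0]; ring_nf
  rw [hsqrt]
  exact rpow_mul_exp_neg_half_le hp (Real.log_nonneg (one_le_one_div hs0 hs1))

theorem one_lt_log_one_div {s : ℝ} (hs0 : 0 < s) (hs : s < Real.exp (-1)) :
    1 < Real.log (1 / s) := by
  have := Real.log_lt_log hs0 hs
  rw [Real.log_exp] at this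
  rw [one_div, Real.log_inv]; linarith

/-- The exponent is chosen so that `(s (log (1/s))^(2α/3))^(3/2) = (log (1/s))^α s^(3/2)`. -/
def logGainScale (α s : ℝ) : ℝ := min (s * Real.log (1 / s) ^ (2 * α / 3)) (1 / 2)

variable {α s : ℝ}

theorem lt_logGainScale (hα : 0 < α) (hs0 : 0 < s) (hs : s < Real.exp (-1)) :
    s < logGainScale α s :=
  lt_min (lt_mul_of_one_lt_right hs0 (Real.one_lt_rpow (one_lt_log_one_div hs0 hs) (by positivity)))
    (hs.trans Real.exp_neg_one_lt_half)

theorem logGainScale_lt_one : logGainScale α s < 1 :=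
  (min_le_right _ _).trans_lt (by norm_num)

theorem log_one_div_rpow_mul_rpow_le (hα : 0 < α) (hs0 : 0 < s) (hs1 : s ≤ 1) :
    Real.log (1 / s) ^ α * s ^ ((3:ℝ)/2) ≤ (2 * α) ^ α := by
  refine le_trans ?_ (log_one_div_rpow_mul_sqrt_le hα hs0 hs1)
  gcongr
  · exact Real.rpow_nonneg (Real.log_nonneg (one_le_one_div hs0 hs1)) α
  · rw [Real.sqrt_eq_rpow]
    exact Real.rpow_le_rpow_of_exponent_ge hs0 hs1 (by norm_num)

theorem log_one_div_rpow_mul_rpow_div_le (hα : 0 < α) (hs0 : 0 < s) (hs : s < Real.exp (-1)) :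
    Real.log (1 / s) ^ α * s ^ ((3:ℝ)/2) / logGainScale α s ^ ((3:ℝ)/2)
      ≤ max 1 (2 ^ ((3:ℝ)/2) * (2 * α) ^ α) := by
  have hL := (one_lt_log_one_div hs0 hs).le
  rcases min_cases (s * Real.log (1 / s) ^ (2 * α / 3)) (1 / 2) with ⟨h, _⟩ | ⟨h, _⟩
  · have : logGainScale α s ^ ((3:ℝ)/2) = Real.log (1 / s) ^ α * s ^ ((3:ℝ)/2) := by
      rw [logGainScale, h, Real.mul_rpow hs0.le (by positivity), ← Real.rpow_mul (by linarith)]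
      ring_nf
    rw [this, div_self (by positivity)]
    exact le_max_left _ _
  · rw [logGainScale, h, Real.div_rpow zero_le_one zero_le_two, Real.one_rpow, div_div_eq_mul_div,
      div_one, mul_comm (Real.log (1 / s) ^ α * _)]
    exact le_max_of_le_right <| mul_le_mul_of_nonneg_left
      (log_one_div_rpow_mul_rpow_le hα hs0 (hs.trans (Real.exp_lt_one_iff.2 (by norm_num))).le)
      (by positivity)

theorem log_one_div_rpow_mul_sqrt_logGainScale_le (hα : 0 < α) (hs0 : 0 < s)
    (hs : s < Real.exp (-1)) :
    Real.log (1 / s) ^ α * Real.sqrt (logGainScale α s)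
      ≤ (2 * (4 * α / 3)) ^ (4 * α / 3) := by
  have hL := (one_lt_log_one_div hs0 hs).le
  have hs1 : s ≤ 1 := (hs.trans (Real.exp_lt_one_iff.2 (by norm_num))).le
  have hsqrt : Real.sqrt (s * Real.log (1 / s) ^ (2 * α / 3))
      = Real.log (1 / s) ^ (α / 3) * Real.sqrt s := by
    rw [Real.sqrt_mul hs0.le, Real.sqrt_eq_rpow (_ ^ _), ← Real.rpow_mul (by linarith)]
    ring_nf
  calc Real.log (1 / s) ^ α * Real.sqrt (logGainScale α s)
      ≤ Real.log (1 / s) ^ α * Real.sqrt (s * Real.log (1 / s) ^ (2 * α / 3)) := by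
        gcongr; exact min_le_left _ _
    _ = Real.log (1 / s) ^ (4 * α / 3) * Real.sqrt s := by
        rw [hsqrt, ← mul_assoc, ← Real.rpow_add (by linarith)]; ring_nf
    _ ≤ (2 * (4 * α / 3)) ^ (4 * α / 3) := log_one_div_rpow_mul_sqrt_le (by positivity) hs0 hs1

theorem exists_log_gain_bound (hα : 0 < α) : ∃ C : ℝ, ∀ s ∈ Ioo 0 (Real.exp (-1)),
    Real.log (1 / s) ^ α * s ^ ((3:ℝ)/2) ≤ C ∧
    Real.log (1 / s) ^ α * s ^ ((3:ℝ)/2) / logGainScale α s ^ ((3:ℝ)/2) ≤ C ∧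
    Real.log (1 / s) ^ α * Real.sqrt (logGainScale α s) ≤ C := by
  refine ⟨max ((2 * α) ^ α) (max (max 1 (2 ^ ((3:ℝ)/2) * (2 * α) ^ α))
    ((2 * (4 * α / 3)) ^ (4 * α / 3))), fun s ⟨hs0, hs⟩ => ⟨?_, ?_, ?_⟩⟩
  · exact le_max_of_le_left <| log_one_div_rpow_mul_rpow_le hα hs0
      (hs.trans (Real.exp_lt_one_iff.2 (by norm_num))).le
  · exact le_max_of_le_right <| le_max_of_le_left <| log_one_div_rpow_mul_rpow_div_le hα hs0 hs
  · exact le_max_of_le_right <| le_max_of_le_right <|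
      log_one_div_rpow_mul_sqrt_logGainScale_le hα hs0 hs

end Deterministic

section Probability

theorem _root_.TightFamily.exists_nonneg_bound {Ω ι : Type*} [MeasurableSpace Ω]
    {P : Measure Ω} {X : ι → Ω → ℝ} (h : TightFamily P X) {ε : ℝ} (hε : 0 < ε) :
    ∃ M, 0 ≤ M ∧ ∀ i, P {ω | M < |X i ω|} ≤ ENNReal.ofReal ε :=
  let ⟨M, hM⟩ := h ε hε
  ⟨max M 0, le_max_right M 0,
    fun i => (measure_mono fun _ hω => (le_max_left M 0).trans_lt hω).trans (hM i)⟩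

variable {Ω : Type*} [MeasurableSpace Ω] (P : Measure Ω)

theorem measure_le_of_eventually_mem {s : ℕ → Set Ω} {t : Set Ω} {δ : ℝ≥0∞}
    (ht : ∀ ω ∈ t, ∀ᶠ n in atTop, ω ∈ s n) (hs : ∀ n, P (s n) ≤ δ) :
    P t ≤ δ := by
  have hsub : t ⊆ ⋃ N, ⋂ n ≥ N, s n := fun ω hω => by
    simpa only [mem_iUnion, mem_iInter] using eventually_atTop.1 (ht ω hω)
  have hmono : Monotone fun N => ⋂ n ≥ N, s n := fun N M hNM =>
    biInter_mono (fun n (hn : M ≤ n) => hNM.trans hn) fun _ _ => subset_rfl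
  calc P t ≤ P (⋃ N, ⋂ n ≥ N, s n) := measure_mono hsub
    _ = ⨆ N, P (⋂ n ≥ N, s n) := hmono.measure_iUnion
    _ ≤ δ := iSup_le fun N => (measure_mono (biInter_subset_of_mem le_rfl)).trans (hs N)

theorem exists_measure_lt_le [IsFiniteMeasure P] {Z : Ω → ℝ≥0∞} (hZ : Measurable Z)
    (hfin : ∀ ω, Z ω ≠ ⊤) {δ : ℝ≥0∞} (hδ : 0 < δ) :
    ∃ N : ℕ, P {ω | N < Z ω} ≤ δ := by
  have hanti : Antitone fun N : ℕ => {ω | (N : ℝ≥0∞) < Z ω} := fun N M hNM ω hω =>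
    show (N : ℝ≥0∞) < Z ω from (Nat.cast_le.2 hNM).trans_lt hω
  have hempty : ⋂ N : ℕ, {ω | (N : ℝ≥0∞) < Z ω} = ∅ :=
    eq_empty_of_forall_notMem fun ω hω =>
    let ⟨N, hN⟩ := ENNReal.exists_nat_gt (hfin ω)
    (mem_iInter.1 hω N).not_gt hN
  have hlim := tendsto_measure_iInter_atTop (μ := P)
    (s := fun N : ℕ => {ω | (N : ℝ≥0∞) < Z ω})
    (fun N => (hZ measurableSet_Ioi).nullMeasurableSet) hanti ⟨0, measure_ne_top P _⟩
  rw [hempty, measure_empty] at hlim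
  exact ((hlim.eventually (gt_mem_nhds hδ)).exists).imp fun _ => le_of_lt

/-- `sqrtLaplace (β ω) t` may be infinite (the Bochner integral in `hY` is then `0`) even when
`laplace (β ω) s` is finite, e.g. for `t = s`; so the bound is reached as the limit of
`sqrtLaplace (β ω) ν`, `ν ↓ t`, which are finite because `ν > s`. -/
theorem measure_sqrtLaplace_gt_le (β : Ω → Measure ℝ) {M : ℝ} {δ : ℝ≥0∞}
    (hY : ∀ ν : Ioo (0:ℝ) 1, P {ω | M < |(ν : ℝ) ^ ((3:ℝ)/2) *
      ∫ x in Ici 0, Real.sqrt x * Real.exp (-(ν : ℝ) * x) ∂β ω|} ≤ δ)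
    {s t : ℝ} (hst : s ≤ t) (ht0 : 0 < t) (ht1 : t < 1) :
    P {ω | laplace (β ω) s < ⊤ ∧
      ENNReal.ofReal (M / t ^ ((3:ℝ)/2)) < sqrtLaplace (β ω) t} ≤ δ := by
  obtain ⟨u, hu_anti, hu_mem, hu_lim⟩ := exists_seq_strictAnti_tendsto' ht1
  refine measure_le_of_eventually_mem P ?_ fun n =>
    hY ⟨u n, ht0.trans (hu_mem n).1, (hu_mem n).2⟩
  rintro ω ⟨hfin, hgt⟩
  filter_upwards [(tendsto_sqrtLaplace (β ω) hu_anti.antitone hu_lim).eventually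
    (lt_mem_nhds hgt)] with n hn
  have hu_pos : 0 < u n := ht0.trans (hu_mem n).1
  have hfin' := sqrtLaplace_lt_top (β ω) (hst.trans_lt (hu_mem n).1) hfin
  have hlt : M / t ^ ((3:ℝ)/2) < (sqrtLaplace (β ω) (u n)).toReal := by
    by_cases hM : 0 ≤ M / t ^ ((3:ℝ)/2)
    · exact (ENNReal.ofReal_lt_iff_lt_toReal hM hfin'.ne).1 hn
    · exact (not_le.1 hM).trans_le ENNReal.toReal_nonneg
  have hpow : t ^ ((3:ℝ)/2) ≤ u n ^ ((3:ℝ)/2) :=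
    Real.rpow_le_rpow ht0.le (hu_mem n).1.le (by norm_num)
  rw [integral_sqrt_mul_exp_eq_toReal_sqrtLaplace, abs_of_nonneg (by positivity)]
  rw [div_lt_iff₀' (by positivity)] at hlt
  exact hlt.trans_le (mul_le_mul_of_nonneg_right hpow ENNReal.toReal_nonneg)

end Probability

theorem tightFamily_log_rpow_mul_laplace {Ω : Type*} [MeasurableSpace Ω] (P : Measure Ω)
    [IsFiniteMeasure P] (β : Ω → Measure ℝ) (hmeas : Measurable β)
    (hloc : ∀ ω, IsLocallyFiniteMeasure (β ω))
    (htight : TightFamily P (fun l : Ioo (0:ℝ) 1 => fun ω =>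
      (l : ℝ) ^ ((3:ℝ)/2) * ∫ x in Ici 0, Real.sqrt x * Real.exp (-(l:ℝ) * x) ∂β ω))
    {α : ℝ} (hα : 0 < α) :
    TightFamily P (fun l : Ioo (0:ℝ) (Real.exp (-1)) => fun ω =>
      Real.log (1 / (l:ℝ)) ^ α * (l : ℝ) ^ ((3:ℝ)/2) *
        ∫ x in Ici 0, Real.exp (-(l:ℝ) * x) ∂β ω) := by
  obtain ⟨C, hC⟩ := exists_log_gain_bound hα
  intro ε hε
  have hε3 : 0 < ε / 3 := by positivity
  obtain ⟨M, hM, hY⟩ := htight.exists_nonneg_bound hε3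
  obtain ⟨N, hN⟩ := exists_measure_lt_le P
    ((Measure.measurable_coe measurableSet_Ico).comp hmeas)
    (fun ω => have := hloc ω; measure_Ico_lt_top.ne) (ENNReal.ofReal_pos.2 hε3)
  refine ⟨C * (N + Real.exp 1 * M + M), fun ⟨s, hs0, hs⟩ => ?_⟩
  obtain ⟨h₁, h₂, h₃⟩ := hC s ⟨hs0, hs⟩
  set t := logGainScale α s
  have hst : s < t := lt_logGainScale hα hs0 hs
  have hs1 : s < 1 := hs.trans (Real.exp_neg_one_lt_half.trans (by norm_num))
  have hLα : 0 ≤ Real.log (1 / s) ^ α :=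
    Real.rpow_nonneg (zero_le_one.trans (one_lt_log_one_div hs0 hs).le) α
  have hsub : {ω | C * (N + Real.exp 1 * M + M) < |Real.log (1 / s) ^ α * s ^ ((3:ℝ)/2) *
        ∫ x in Ici 0, Real.exp (-s * x) ∂β ω|}
      ⊆ {ω | (N : ℝ≥0∞) < β ω (Ico 0 1)}
        ∪ {ω | laplace (β ω) s < ⊤ ∧
            ENNReal.ofReal (M / t ^ ((3:ℝ)/2)) < sqrtLaplace (β ω) t}
        ∪ {ω | laplace (β ω) s < ⊤ ∧
            ENNReal.ofReal (M / s ^ ((3:ℝ)/2)) < sqrtLaplace (β ω) s} := by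
    intro ω hω
    by_contra hgood
    simp only [mem_union, mem_ofPred_eq, not_or, not_and, not_lt] at hgood
    obtain ⟨⟨hZ, hFt⟩, hFs⟩ := hgood
    rw [mem_ofPred_eq, integral_exp_eq_toReal_laplace, abs_of_nonneg (by positivity)] at hω
    rcases eq_top_or_lt_top (laplace (β ω) s) with htop | hfin
    · rw [htop, ENNReal.toReal_top, mul_zero] at hω
      exact hω.not_ge (mul_nonneg ((mul_nonneg hLα (by positivity)).trans h₁) (by positivity))
    · exact hω.not_ge (mul_toReal_laplace_le (β ω) hs0 (hs0.trans hst).le hLα N.cast_nonneg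
        hM h₁ h₂ h₃ (by simpa using hZ) (hFt hfin) (hFs hfin))
  calc _ ≤ _ := measure_mono hsub
    _ ≤ _ := (measure_union_le _ _).trans (add_le_add (measure_union_le _ _) le_rfl)
    _ ≤ ENNReal.ofReal (ε / 3) + ENNReal.ofReal (ε / 3) + ENNReal.ofReal (ε / 3) :=
        add_le_add (add_le_add hN (measure_sqrtLaplace_gt_le P β hY hst.le (hs0.trans hst)
          logGainScale_lt_one)) (measure_sqrtLaplace_gt_le P β hY le_rfl hs0 hs1)
    _ = ENNReal.ofReal ε := by
        rw [← ENNReal.ofReal_add hε3.le hε3.le, ← ENNReal.ofReal_add (by positivity) hε3.le]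
        ring_nf

theorem convInProb_zero_of_tightFamily_mul {Ω ι : Type*} [MeasurableSpace Ω] (P : Measure Ω)
    {l : Filter ι} {S : Set ι} (hS : S ∈ l) {w : ι → ℝ} (hw : Tendsto w l atTop)
    {X : ι → Ω → ℝ} (hX : TightFamily P (fun i : S => fun ω => w i * X i ω)) :
    ConvInProb P l X 0 := by
  intro ε hε
  rw [ENNReal.tendsto_nhds_zero]
  intro δ hδ
  rcases eq_or_ne δ ⊤ with rfl | hδtop
  · exact Eventually.of_forall fun _ => le_top
  obtain ⟨M, hM⟩ := hX δ.toReal (ENNReal.toReal_pos hδ.ne' hδtop)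
  filter_upwards [hS, hw.eventually_gt_atTop (|M| / ε)] with i hiS hwi
  rw [← ENNReal.ofReal_toReal hδtop]
  refine (measure_mono fun ω (hω : ε < |X i ω - 0|) => ?_).trans (hM ⟨i, hiS⟩)
  rw [sub_zero] at hω
  rw [div_lt_iff₀ hε] at hwi
  have hw0 : 0 < w i := by nlinarith [abs_nonneg M]
  show M < |w i * X i ω|
  rw [abs_mul, abs_of_pos hw0]
  nlinarith [le_abs_self M]

theorem tendsto_log_one_div_nhdsGT_zero :
    Tendsto (fun s : ℝ => Real.log (1 / s)) (𝓝[>] 0) atTop :=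
  (tendsto_neg_atBot_atTop.comp Real.tendsto_log_nhdsGT_zero).congr fun s => by
    simp [Real.log_inv]

end LogGain

theorem log_gain_tightness_general
    {Ω : Type*} [MeasurableSpace Ω] (P : Measure Ω) [IsProbabilityMeasure P]
    (β : Ω → Measure ℝ) (hmeas : Measurable β)
    (hloc : ∀ ω, IsLocallyFiniteMeasure (β ω))
    (htight : TightFamily P (fun l : Set.Ioo (0:ℝ) 1 => fun ω =>
      (l : ℝ) ^ ((3:ℝ)/2) * ∫ x in Set.Ici (0:ℝ),
        Real.sqrt x * Real.exp (-(l:ℝ) * x) ∂(β ω))) :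
    (∀ α : ℝ, 1 < α →
      TightFamily P (fun l : Set.Ioo (0:ℝ) (Real.exp (-1)) => fun ω =>
        Real.log (1 / (l:ℝ)) ^ α * (l : ℝ) ^ ((3:ℝ)/2) *
          ∫ x in Set.Ici (0:ℝ), Real.exp (-(l:ℝ) * x) ∂(β ω)))
    ∧
    ConvInProb P (nhdsWithin (0:ℝ) (Set.Ioi 0))
      (fun l ω => Real.log (1 / l) * l ^ ((3:ℝ)/2) *
        ∫ x in Set.Ici (0:ℝ), Real.exp (-l * x) ∂(β ω)) 0 := by
  refine ⟨fun α hα => LogGain.tightFamily_log_rpow_mul_laplace P β hmeas hloc htight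
      (zero_lt_one.trans hα),
    LogGain.convInProb_zero_of_tightFamily_mul P (Ioo_mem_nhdsGT (Real.exp_pos (-1)))
      LogGain.tendsto_log_one_div_nhdsGT_zero ?_⟩
  convert LogGain.tightFamily_log_rpow_mul_laplace P β hmeas hloc htight two_pos using 3 with l ω
  rw [Real.rpow_two]
  ring

/-- If `λ^{3/2} ∫ √x e^{-λx} β(dx)` is tight for `λ ∈ (0,1)` then, for every `α > 1`,
`(log(1/λ))^α λ^{3/2} ∫ e^{-λx} β(dx)` is tight for `λ ∈ (0,1/e)`, and consequently
`log(1/λ) λ^{3/2} ∫ e^{-λx} β(dx) → 0` in probability as `λ → 0+`. -/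
theorem log_gain_tightness
    {Ω : Type*} [MeasurableSpace Ω] (P : Measure Ω) [IsProbabilityMeasure P]
    (β : Ω → Measure ℝ) (hmeas : Measurable β)
    (hloc : ∀ ω, IsLocallyFiniteMeasure (β ω))
    (hsupp : ∀ ω, β ω (Set.Iio 0) = 0)
    (htight : TightFamily P (fun l : Set.Ioo (0:ℝ) 1 => fun ω =>
      (l : ℝ) ^ ((3:ℝ)/2) * ∫ x in Set.Ici (0:ℝ),
        Real.sqrt x * Real.exp (-(l:ℝ) * x) ∂(β ω))) :
    (∀ α : ℝ, 1 < α →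
      TightFamily P (fun l : Set.Ioo (0:ℝ) (Real.exp (-1)) => fun ω =>
        Real.log (1 / (l:ℝ)) ^ α * (l : ℝ) ^ ((3:ℝ)/2) *
          ∫ x in Set.Ici (0:ℝ), Real.exp (-(l:ℝ) * x) ∂(β ω)))
    ∧
    ConvInProb P (nhdsWithin (0:ℝ) (Set.Ioi 0))
      (fun l ω => Real.log (1 / l) * l ^ ((3:ℝ)/2) *
        ∫ x in Set.Ici (0:ℝ), Real.exp (-l * x) ∂(β ω)) 0 :=
  log_gain_tightness_general P β hmeas hloc htight
end
end

section
/- Let η_n be a sequence in 𝓜₂ and let η ∈ 𝓜 be a point measure such that η_n → η vaguely (∫h dη_n → ∫h dη for every nonnegative continuous compactly supported h : ℝ → ℝ). Assume that for each integer k ≥ 1, sup_n ∫α_k dη_n < ∞, and that sup_n max η_n < ∞ and limsup_{n→∞} max η_n > −∞. Then η ∈ 𝓜₂ and η_n d₂-converges to η. -/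
/-!
Vague convergence controls integrals of compactly supported bumps, and the mass of a point
measure on a compact window comes in integer units, so it can neither appear nor disappear in
the limit. Bumps between a compact `K` and an open `U ⊇ K` show that `η` has no mass above the
common bound `M` of the maxima, that the frequently large maxima leave an atom of `η` behind,
and that `max ηn → max η` from both sides.

For the tails, Fatou's lemma along cut-offs gives `∫ α_k dη ≤ sup_n ∫ α_k dηn`. Since
`α_k ≥ exp (-m² / k)` on `[-m, -m + 1]`, this bounds the windows of `η` subgaussianly; since
`α_k ≤ exp (-t² / 2k) α_{2k}` below `-t`, the uniform bound on `∫ α_{2k} dηn` makes the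
`α_k` uniformly integrable, which upgrades vague convergence to convergence of `∫ α_k`.
-/

open MeasureTheory Filter Set

noncomputable section

/-- A point measure on `ℝ`: a Borel measure that takes values in `ℕ` on bounded Borel sets
(in particular it is locally finite). -/
def IsPointMeasure (η : Measure ℝ) : Prop :=
  ∀ B : Set ℝ, MeasurableSet B → Bornology.IsBounded B → ∃ n : ℕ, η B = n

/-- Membership in the space `𝓜₂`: a nonzero point measure, finite on `[0,∞)`, whose mass on
`[-m,-m+1]` grows subgaussianly. -/
def MemM2 (η : Measure ℝ) : Prop :=
  IsPointMeasure η ∧ η ≠ 0 ∧ η (Set.Ici 0) < ⊤ ∧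
    Tendsto (fun m : ℕ =>
        (1 / (m : ℝ) ^ 2) *
          Real.log (max ((η (Set.Icc (-(m:ℝ)) (-(m:ℝ) + 1))).toReal) 1))
      atTop (nhds 0)

/-- The supremum of the support of a point measure (the position of the maximal atom). -/
noncomputable def maxM (η : Measure ℝ) : ℝ := sSup {x : ℝ | η (Set.Ici x) ≠ 0}

/-- The functions `α_k` used in the definition of the metric `d₂`. -/
noncomputable def alphaF (k : ℕ) (x : ℝ) : ℝ :=
  if x ≤ -1 then Real.exp (-x ^ 2 / (k:ℝ))
  else if x < 0 then -Real.exp (-1 / (k:ℝ)) * x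
  else 0

/-- The class `C_{d₂}⁺(ℝ)` of nonnegative bounded continuous functions vanishing
subgaussianly fast at `-∞`. -/
def MemCd2 (f : ℝ → ℝ) : Prop :=
  Continuous f ∧ (∀ x, 0 ≤ f x) ∧ (∃ Cb : ℝ, ∀ x, f x ≤ Cb) ∧
    ∃ lam > (0:ℝ), ∃ C : ℝ, ∀ᶠ x in atBot, Real.exp (lam * x ^ 2) * f x ≤ C

/-- Vague convergence of measures on `ℝ`. -/
def VagueTendsto (ηn : ℕ → Measure ℝ) (η : Measure ℝ) : Prop :=
  ∀ h : ℝ → ℝ, Continuous h → HasCompactSupport h → (∀ x, 0 ≤ h x) →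
    Tendsto (fun n => ∫ x, h x ∂(ηn n)) atTop (nhds (∫ x, h x ∂η))

/-- `d₂`-convergence in `𝓜₂`: vague convergence, convergence of the maxima, and convergence
of the integrals of the functions `α_k`. -/
def D2Tendsto (ηn : ℕ → Measure ℝ) (η : Measure ℝ) : Prop :=
  VagueTendsto ηn η ∧
    Tendsto (fun n => maxM (ηn n)) atTop (nhds (maxM η)) ∧
    ∀ k : ℕ, 1 ≤ k →
      Tendsto (fun n => ∫ x, alphaF k x ∂(ηn n)) atTop (nhds (∫ x, alphaF k x ∂η))

open scoped ENNReal Topology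

lemma measure_Icc_ne_zero {μ : Measure ℝ} {a b : ℝ} (ha : μ (Ioi a) ≠ 0) (hb : μ (Ioi b) = 0) :
    μ (Icc a b) ≠ 0 := fun h ↦ ha <| measure_mono_null
  (Ioi_subset_Ioc_union_Ioi.trans (union_subset_union_left _ Ioc_subset_Icc_self))
  (measure_union_null h hb)

namespace IsPointMeasure

variable {μ : Measure ℝ}

lemma isFiniteMeasureOnCompacts (hμ : IsPointMeasure μ) : IsFiniteMeasureOnCompacts μ where
  lt_top_of_isCompact _ hK := by
    obtain ⟨n, hn⟩ := hμ _ hK.measurableSet hK.isBounded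
    simp [hn]

lemma one_le_of_ne_zero (hμ : IsPointMeasure μ) {B : Set ℝ} (hB : MeasurableSet B)
    (hb : Bornology.IsBounded B) (h : μ B ≠ 0) : 1 ≤ μ B := by
  obtain ⟨n, hn⟩ := hμ B hB hb
  rw [hn] at h ⊢
  exact_mod_cast Nat.one_le_iff_ne_zero.2 (by exact_mod_cast h)

lemma one_le_measure_Icc (hμ : IsPointMeasure μ) {a b : ℝ} (ha : μ (Ioi a) ≠ 0)
    (hb : μ (Ioi b) = 0) : 1 ≤ μ (Icc a b) :=
  hμ.one_le_of_ne_zero measurableSet_Icc (Metric.isBounded_Icc a b) (measure_Icc_ne_zero ha hb)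

lemma exists_measure_Ioi_eq_zero (hμ : IsPointMeasure μ) (h0 : μ (Ici 0) ≠ ∞) :
    ∃ b, μ (Ioi b) = 0 := by
  have hlim : Tendsto (fun n : ℕ ↦ μ (Ioi n)) atTop (𝓝 0) := by
    have hempty : ⋂ n : ℕ, Ioi (n : ℝ) = ∅ :=
      iInter_eq_empty_iff.2 fun x ↦ (exists_nat_ge x).imp fun _ ↦ not_lt.2
    simpa [hempty, Function.comp_def] using tendsto_measure_iInter_atTop (μ := μ)
      (fun _ ↦ measurableSet_Ioi.nullMeasurableSet)
      (fun m n hmn ↦ Ioi_subset_Ioi (Nat.cast_le.2 hmn))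
      ⟨0, ne_top_of_le_ne_top h0 (measure_mono (by simp))⟩
  obtain ⟨n, hn⟩ := (hlim.eventually (gt_mem_nhds zero_lt_one)).exists
  refine ⟨n, ?_⟩
  have hunion : ⋃ j : ℕ, Ioc (n : ℝ) (n + j) = Ioi (n : ℝ) :=
    iUnion_Ioc_eq_Ioi_self_iff.2 fun x _ ↦ (exists_nat_ge (x - n)).imp fun _ h ↦ by linarith
  rw [← hunion]
  refine measure_iUnion_null fun j ↦ ?_
  by_contra hj
  have := (hμ.one_le_of_ne_zero measurableSet_Ioc (Metric.isBounded_Ioc _ _) hj).trans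
    (measure_mono (hunion ▸ subset_iUnion _ j))
  exact absurd hn (not_lt.2 this)

end IsPointMeasure

lemma maxM_le_iff {μ : Measure ℝ} (h0 : μ ≠ 0) {b : ℝ} (hb : μ (Ioi b) = 0) {y : ℝ} :
    maxM μ ≤ y ↔ μ (Ioi y) = 0 := by
  have hle : ∀ {y x}, μ (Ioi y) = 0 → μ (Ici x) ≠ 0 → x ≤ y := fun hy hx ↦
    not_lt.1 fun hxy ↦ hx (measure_mono_null (Ici_subset_Ioi.2 hxy) hy)
  have hne : ∃ x, μ (Ici x) ≠ 0 := by
    by_contra! h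
    have hunion : ⋃ n : ℕ, Ici (-(n : ℝ)) = univ :=
      iUnion_eq_univ_iff.2 fun x ↦ (exists_nat_ge (-x)).imp fun _ h ↦ by simp; linarith
    exact h0 (Measure.measure_univ_eq_zero.1 (hunion ▸ measure_iUnion_null fun n ↦ h _))
  refine ⟨fun hy ↦ ?_, fun hy ↦ csSup_le hne fun x ↦ hle hy⟩
  have hunion : ⋃ n : ℕ, Ici (y + 1 / (n + 1)) = Ioi y :=
    iUnion_Ici_eq_Ioi_of_lt_of_tendsto (fun n : ℕ ↦ by simp; positivity)
      (by simpa using tendsto_one_div_add_atTop_nhds_zero_nat.const_add y)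
  refine hunion ▸ measure_iUnion_null fun n ↦ not_not.1 fun hn ↦ ?_
  have hle' : y + 1 / (n + 1) ≤ maxM μ := le_csSup ⟨b, fun x ↦ hle hb⟩ hn
  have : (0 : ℝ) < 1 / (n + 1) := by positivity
  linarith

lemma lt_maxM_iff {μ : Measure ℝ} (h0 : μ ≠ 0) {b : ℝ} (hb : μ (Ioi b) = 0) {y : ℝ} :
    y < maxM μ ↔ μ (Ioi y) ≠ 0 := by
  rw [← not_le, maxM_le_iff h0 hb]

section Subgaussian

variable {t : ℕ → ℝ}

lemma eventually_le_exp_mul_sq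
    (ht : Tendsto (fun m : ℕ ↦ 1 / (m : ℝ) ^ 2 * Real.log (max (t m) 1)) atTop (𝓝 0))
    {ε : ℝ} (hε : 0 < ε) : ∀ᶠ m : ℕ in atTop, t m ≤ Real.exp (ε * m ^ 2) := by
  filter_upwards [ht.eventually (gt_mem_nhds hε), eventually_ge_atTop 1] with m hm hm1
  have hm2 : (0 : ℝ) < (m : ℝ) ^ 2 := by positivity
  rw [one_div, inv_mul_lt_iff₀ hm2] at hm
  calc t m ≤ max (t m) 1 := le_max_left _ _
    _ = Real.exp (Real.log (max (t m) 1)) := (Real.exp_log (by positivity)).symm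
    _ ≤ _ := Real.exp_le_exp.2 (by linarith)

lemma tendsto_log_div_sq_of_le_exp
    (hbound : ∀ ε > 0, ∃ C, ∀ᶠ m : ℕ in atTop, t m ≤ C * Real.exp (ε * m ^ 2)) :
    Tendsto (fun m : ℕ ↦ 1 / (m : ℝ) ^ 2 * Real.log (max (t m) 1)) atTop (𝓝 0) := by
  refine tendsto_order.2 ⟨fun a ha ↦ Eventually.of_forall fun m ↦ ha.trans_le
    (mul_nonneg (by positivity) (Real.log_nonneg (le_max_right _ _))), fun a ha ↦ ?_⟩
  obtain ⟨C, hC⟩ := hbound (a / 2) (half_pos ha)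
  have hlim : Tendsto (fun m : ℕ ↦ Real.log (max C 1) / (m : ℝ) ^ 2) atTop (𝓝 0) :=
    tendsto_const_nhds.div_atTop
      ((tendsto_pow_atTop two_ne_zero).comp tendsto_natCast_atTop_atTop)
  filter_upwards [hC, hlim.eventually (gt_mem_nhds (half_pos ha)), eventually_ge_atTop 1]
    with m hm hlog hm1
  have hm2 : (0 : ℝ) < (m : ℝ) ^ 2 := by positivity
  have hle : Real.log (max (t m) 1) ≤ Real.log (max C 1) + a / 2 * m ^ 2 := by
    rw [← Real.log_exp (a / 2 * m ^ 2), ← Real.log_mul (by positivity) (by positivity)]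
    refine Real.log_le_log (by positivity) (max_le ?_ ?_)
    · exact hm.trans (mul_le_mul_of_nonneg_right (le_max_left _ _) (Real.exp_pos _).le)
    · exact one_le_mul_of_one_le_of_one_le (le_max_right _ _) (Real.one_le_exp (by positivity))
  calc 1 / (m : ℝ) ^ 2 * Real.log (max (t m) 1)
      ≤ 1 / (m : ℝ) ^ 2 * (Real.log (max C 1) + a / 2 * m ^ 2) := by gcongr
    _ = Real.log (max C 1) / m ^ 2 + a / 2 := by field_simp
    _ < a := by linarith

end Subgaussian

section alphaF

lemma alphaF_of_le_neg_one (k : ℕ) {x : ℝ} (hx : x ≤ -1) :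
    alphaF k x = Real.exp (-x ^ 2 / k) :=
  if_pos hx

lemma alphaF_of_nonneg (k : ℕ) {x : ℝ} (hx : 0 ≤ x) : alphaF k x = 0 := by
  rw [alphaF, if_neg (by linarith), if_neg (not_lt.2 hx)]

lemma alphaF_nonneg (k : ℕ) (x : ℝ) : 0 ≤ alphaF k x := by
  unfold alphaF
  split_ifs
  · positivity
  · nlinarith [Real.exp_pos (-1 / k)]
  · exact le_rfl

lemma continuous_alphaF (k : ℕ) : Continuous (alphaF k) := by
  have hinner : Continuous fun x : ℝ ↦ if 0 ≤ x then 0 else -Real.exp (-1 / k) * x :=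
    continuous_const.if_le (by fun_prop) continuous_const continuous_id fun x hx ↦ by simp [← hx]
  have hsplit : alphaF k = fun x ↦ if x ≤ -1 then Real.exp (-x ^ 2 / k)
      else if 0 ≤ x then 0 else -Real.exp (-1 / k) * x := by
    ext x
    unfold alphaF
    split_ifs <;> first | rfl | (exfalso; linarith)
  rw [hsplit]
  refine Continuous.if_le (by fun_prop) hinner continuous_id continuous_const fun x hx ↦ ?_
  simp [hx]

lemma alphaF_le_exp_neg_sq (k : ℕ) {t x : ℝ} (ht : 0 ≤ t) (hx : x ≤ -t) :
    alphaF k x ≤ Real.exp (-t ^ 2 / k) := by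
  unfold alphaF
  split_ifs
  · exact Real.exp_le_exp.2 (div_le_div_of_nonneg_right (by nlinarith) k.cast_nonneg)
  · have h1k : Real.exp (-1 / k) ≤ Real.exp (-t ^ 2 / k) :=
      Real.exp_le_exp.2 (div_le_div_of_nonneg_right (by nlinarith) k.cast_nonneg)
    nlinarith [Real.exp_pos (-1 / k)]
  · positivity

lemma exp_neg_sq_le_alphaF (k : ℕ) {t x : ℝ} (hx : x ≤ -1) (hxt : -t ≤ x) :
    Real.exp (-t ^ 2 / k) ≤ alphaF k x := by
  rw [alphaF_of_le_neg_one k hx]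
  exact Real.exp_le_exp.2 (div_le_div_of_nonneg_right (by nlinarith) k.cast_nonneg)

lemma alphaF_le_exp_mul_alphaF_two_mul (k : ℕ) {t x : ℝ} (ht : 1 ≤ t) (hx : x ≤ -t) :
    alphaF k x ≤ Real.exp (-t ^ 2 / (2 * k)) * alphaF (2 * k) x := by
  rw [alphaF_of_le_neg_one _ (by linarith), alphaF_of_le_neg_one _ (by linarith),
    ← Real.exp_add, Nat.cast_mul, Nat.cast_two]
  refine Real.exp_le_exp.2 ?_
  have hsplit : -x ^ 2 / k = -x ^ 2 / (2 * k) + -x ^ 2 / (2 * k) := by ring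
  have hsq : -x ^ 2 / (2 * k) ≤ -t ^ 2 / (2 * k) :=
    div_le_div_of_nonneg_right (by nlinarith) (by positivity)
  linarith

end alphaF

section Integrability

variable {μ : Measure ℝ}

lemma ofReal_alphaF_le_tsum_indicator (k : ℕ) (x : ℝ) :
    ENNReal.ofReal (alphaF k x) ≤ ∑' m : ℕ, (Icc (-(m : ℝ)) (-(m : ℝ) + 1)).indicator
      (fun _ ↦ ENNReal.ofReal (Real.exp (-((m : ℝ) - 1) ^ 2 / k))) x := by
  rcases le_or_gt 0 x with hx | hx
  · simp [alphaF_of_nonneg k hx]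
  have hm : (1 : ℝ) ≤ ⌈-x⌉₊ := by exact_mod_cast Nat.one_le_ceil_iff.2 (neg_pos.2 hx)
  have hxm : x ∈ Icc (-(⌈-x⌉₊ : ℝ)) (-(⌈-x⌉₊ : ℝ) + 1) :=
    ⟨by linarith [Nat.le_ceil (-x)], by linarith [Nat.ceil_lt_add_one (neg_nonneg.2 hx.le)]⟩
  refine le_trans ?_ (ENNReal.le_tsum ⌈-x⌉₊)
  rw [indicator_of_mem hxm]
  exact ENNReal.ofReal_le_ofReal (alphaF_le_exp_neg_sq k (by linarith) (by linarith [hxm.2]))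

lemma MemM2.summable_exp_mul_measure_Icc (hμ : MemM2 μ) {k : ℕ} (hk : 1 ≤ k) :
    Summable fun m : ℕ ↦
      Real.exp (-((m : ℝ) - 1) ^ 2 / k) * (μ (Icc (-(m : ℝ)) (-(m : ℝ) + 1))).toReal := by
  have hk0 : (0 : ℝ) < k := by exact_mod_cast hk
  refine Summable.of_norm_bounded_eventually_nat
    (Real.summable_exp_nat_mul_iff.2 (neg_lt_zero.2 (inv_pos.2 hk0))) ?_
  filter_upwards [eventually_le_exp_mul_sq
      (t := fun m : ℕ ↦ (μ (Icc (-(m : ℝ)) (-(m : ℝ) + 1))).toReal) hμ.2.2.2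
      (by positivity : (0 : ℝ) < 1 / (4 * k)), eventually_ge_atTop 4] with m hw hm
  have hm4 : (4 : ℝ) ≤ m := by exact_mod_cast hm
  -- `(m - 1)² - m² / 4 ≥ m` for `m ≥ 4`, so the terms are dominated by `exp (-m / k)`
  have hexp : -((m : ℝ) - 1) ^ 2 / k + 1 / (4 * k) * m ^ 2 ≤ m * -(k : ℝ)⁻¹ := by
    have hid : -((m : ℝ) - 1) ^ 2 / k + 1 / (4 * k) * m ^ 2 - m * -(k : ℝ)⁻¹ =
        -((3 * m ^ 2 / 4 - 3 * m + 1) / k) := by field_simp; ring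
    have : 0 ≤ (3 * (m : ℝ) ^ 2 / 4 - 3 * m + 1) / k := div_nonneg (by nlinarith) hk0.le
    linarith
  rw [Real.norm_of_nonneg (by positivity)]
  calc _ ≤ Real.exp (-((m : ℝ) - 1) ^ 2 / k) * Real.exp (1 / (4 * k) * m ^ 2) := by gcongr
    _ ≤ Real.exp (m * -(k : ℝ)⁻¹) := by rw [← Real.exp_add]; exact Real.exp_le_exp.2 hexp

lemma MemM2.integrable_alphaF (hμ : MemM2 μ) {k : ℕ} (hk : 1 ≤ k) :
    Integrable (alphaF k) μ := by
  have := hμ.1.isFiniteMeasureOnCompacts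
  refine ⟨(continuous_alphaF k).aestronglyMeasurable,
    (hasFiniteIntegral_iff_ofReal (Eventually.of_forall (alphaF_nonneg k))).2 ?_⟩
  calc ∫⁻ x, ENNReal.ofReal (alphaF k x) ∂μ
      ≤ ∫⁻ x, ∑' m : ℕ, (Icc (-(m : ℝ)) (-(m : ℝ) + 1)).indicator
          (fun _ ↦ ENNReal.ofReal (Real.exp (-((m : ℝ) - 1) ^ 2 / k))) x ∂μ :=
        lintegral_mono (ofReal_alphaF_le_tsum_indicator k)
    _ = ∑' m : ℕ, ENNReal.ofReal (Real.exp (-((m : ℝ) - 1) ^ 2 / k)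
          * (μ (Icc (-(m : ℝ)) (-(m : ℝ) + 1))).toReal) := by
        rw [lintegral_tsum fun m ↦ (measurable_const.indicator measurableSet_Icc).aemeasurable]
        refine tsum_congr fun m ↦ ?_
        rw [lintegral_indicator_const measurableSet_Icc, ENNReal.ofReal_mul (Real.exp_pos _).le,
          ENNReal.ofReal_toReal isCompact_Icc.measure_lt_top.ne]
    _ < ∞ := by
        rw [← ENNReal.ofReal_tsum_of_nonneg (fun m ↦ by positivity)
          (hμ.summable_exp_mul_measure_Icc hk)]
        exact ENNReal.ofReal_lt_top

end Integrability

section Vague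

variable {μ : Measure ℝ} {f : ℝ → ℝ} {K U : Set ℝ}

lemma measureReal_le_integral_of_eqOn_one [IsFiniteMeasureOnCompacts μ] (hK : IsCompact K)
    (hf : Continuous f) (hfc : HasCompactSupport f) (hf0 : ∀ x, 0 ≤ f x) (hfK : EqOn f 1 K) :
    μ.real K ≤ ∫ x, f x ∂μ := by
  have hint := hf.integrable_of_hasCompactSupport hfc (μ := μ)
  calc μ.real K = 1 * μ.real K := (one_mul _).symm
    _ ≤ ∫ x in K, f x ∂μ := setIntegral_ge_of_const_le_real hK.measurableSet
        hK.measure_lt_top.ne (fun x hx ↦ (hfK hx).ge) hint.integrableOn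
    _ ≤ ∫ x, f x ∂μ := setIntegral_le_integral hint (Eventually.of_forall hf0)

lemma measure_ne_zero_of_integral_ne_zero (hfU : EqOn f 0 Uᶜ) (h : ∫ x, f x ∂μ ≠ 0) :
    μ U ≠ 0 := fun hU ↦ h <| integral_eq_zero_of_ae <|
  measure_mono_null (fun _ hx ↦ not_not.1 fun hxU ↦ hx (hfU hxU)) hU

variable {ηn : ℕ → Measure ℝ} {η : Measure ℝ}

lemma VagueTendsto.measure_eq_zero [IsFiniteMeasureOnCompacts η] (hv : VagueTendsto ηn η)
    (hU : IsOpen U) (h : ∀ n, ηn n U = 0) : η U = 0 := by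
  rw [hU.measure_eq_iSup_isCompact η]
  simp only [ENNReal.iSup_eq_zero]
  intro K hKU hK
  obtain ⟨f, hfK, hfU, hfc, hf01⟩ := exists_continuous_one_zero_of_isCompact hK
    hU.isClosed_compl (disjoint_compl_right_iff_subset.2 hKU)
  have hf0 : ∀ x, 0 ≤ f x := fun x ↦ (hf01 x).1
  have hzero : ∫ x, f x ∂η = 0 := by
    refine tendsto_nhds_unique (hv f f.continuous hfc hf0) (tendsto_const_nhds.congr fun n ↦ ?_)
    exact (not_not.1 fun hn ↦ measure_ne_zero_of_integral_ne_zero hfU hn (h n)).symm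
  have hle := measureReal_le_integral_of_eqOn_one (μ := η) hK f.continuous hfc hf0 hfK
  rw [hzero] at hle
  exact (measureReal_eq_zero_iff hK.measure_lt_top.ne).1 (le_antisymm hle measureReal_nonneg)

lemma VagueTendsto.measure_ne_zero_of_frequently [∀ n, IsFiniteMeasureOnCompacts (ηn n)]
    (hv : VagueTendsto ηn η) (hK : IsCompact K) (hU : IsOpen U) (hKU : K ⊆ U)
    (h : ∃ᶠ n in atTop, 1 ≤ ηn n K) : η U ≠ 0 := by
  obtain ⟨f, hfK, hfU, hfc, hf01⟩ := exists_continuous_one_zero_of_isCompact hK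
    hU.isClosed_compl (disjoint_compl_right_iff_subset.2 hKU)
  have hf0 : ∀ x, 0 ≤ f x := fun x ↦ (hf01 x).1
  have hfreq : ∃ᶠ n in atTop, ∫ x, f x ∂(ηn n) ∈ Ici 1 := h.mono fun n hn ↦
    le_trans (by simpa [measureReal_def] using ENNReal.toReal_mono hK.measure_lt_top.ne hn)
      (measureReal_le_integral_of_eqOn_one hK f.continuous hfc hf0 hfK)
  have hlim : 1 ≤ ∫ x, f x ∂η :=
    isClosed_Ici.mem_of_frequently_of_tendsto hfreq (hv f f.continuous hfc hf0)
  exact measure_ne_zero_of_integral_ne_zero hfU (by positivity)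

lemma VagueTendsto.eventually_measure_ne_zero [IsFiniteMeasureOnCompacts η]
    (hv : VagueTendsto ηn η) (hK : IsCompact K) (hU : IsOpen U) (hKU : K ⊆ U) (h : η K ≠ 0) :
    ∀ᶠ n in atTop, ηn n U ≠ 0 := by
  obtain ⟨f, hfK, hfU, hfc, hf01⟩ := exists_continuous_one_zero_of_isCompact hK
    hU.isClosed_compl (disjoint_compl_right_iff_subset.2 hKU)
  have hf0 : ∀ x, 0 ≤ f x := fun x ↦ (hf01 x).1
  have hpos : 0 < ∫ x, f x ∂η := (ENNReal.toReal_pos h hK.measure_lt_top.ne).trans_le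
    (measureReal_le_integral_of_eqOn_one hK f.continuous hfc hf0 hfK)
  filter_upwards [(hv f f.continuous hfc hf0).eventually (lt_mem_nhds hpos)] with n hn
  exact measure_ne_zero_of_integral_ne_zero hfU hn.ne'

end Vague

section VagueIntegrals

variable {ηn : ℕ → Measure ℝ} {η : Measure ℝ}
  [∀ n, IsFiniteMeasureOnCompacts (ηn n)] [IsFiniteMeasureOnCompacts η]

/-- Fatou's lemma for vague limits, applied to cut-offs of `g` by bumps equal to `1` on
`[-R, R]`. -/
lemma VagueTendsto.integrable_and_integral_le (hv : VagueTendsto ηn η) {g : ℝ → ℝ} {C : ℝ}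
    (hg : Continuous g) (hg0 : ∀ x, 0 ≤ g x) (hgn : ∀ n, Integrable g (ηn n))
    (hC : ∀ n, ∫ x, g x ∂(ηn n) ≤ C) : Integrable g η ∧ ∫ x, g x ∂η ≤ C := by
  choose χ hχ1 _ hχc hχ01 using fun R : ℕ ↦ exists_continuous_one_zero_of_isCompact
    (isCompact_Icc (a := -(R : ℝ)) (b := R)) isClosed_empty (disjoint_empty _)
  set h : ℕ → ℝ → ℝ := fun R x ↦ χ R x * g x
  have hhc : ∀ R, Continuous (h R) := fun R ↦ (χ R).continuous.mul hg
  have hh0 : ∀ R x, 0 ≤ h R x := fun R x ↦ mul_nonneg (hχ01 R x).1 (hg0 x)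
  have hhC : ∀ R, ∫ x, h R x ∂η ≤ C := fun R ↦
    le_of_tendsto' (hv (h R) (hhc R) (hχc R).mul_right (hh0 R)) fun n ↦
      (integral_mono ((hhc R).integrable_of_hasCompactSupport (hχc R).mul_right) (hgn n)
        fun x ↦ mul_le_of_le_one_left (hg0 x) (hχ01 R x).2).trans (hC n)
  have hlim : ∀ x, Tendsto (fun R ↦ ENNReal.ofReal (h R x)) atTop (𝓝 (ENNReal.ofReal (g x))) :=
    fun x ↦ tendsto_const_nhds.congr' <| (eventually_ge_atTop ⌈|x|⌉₊).mono fun R hR ↦ by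
      have hxR : |x| ≤ R := (Nat.le_ceil _).trans (Nat.cast_le.2 hR)
      simp [h, hχ1 R (abs_le.1 hxR)]
  have hlint : ∫⁻ x, ENNReal.ofReal (g x) ∂η ≤ ENNReal.ofReal C :=
    calc ∫⁻ x, ENNReal.ofReal (g x) ∂η
        = ∫⁻ x, liminf (fun R ↦ ENNReal.ofReal (h R x)) atTop ∂η :=
          lintegral_congr fun x ↦ (hlim x).liminf_eq.symm
      _ ≤ liminf (fun R ↦ ∫⁻ x, ENNReal.ofReal (h R x) ∂η) atTop :=
          lintegral_liminf_le fun R ↦ (hhc R).measurable.ennreal_ofReal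
      _ ≤ ENNReal.ofReal C := liminf_le_of_frequently_le' <| Frequently.of_forall fun R ↦ by
          rw [← ofReal_integral_eq_lintegral_ofReal
            ((hhc R).integrable_of_hasCompactSupport (hχc R).mul_right)
            (Eventually.of_forall (hh0 R))]
          exact ENNReal.ofReal_le_ofReal (hhC R)
  have hint : Integrable g η := ⟨hg.aestronglyMeasurable,
    (hasFiniteIntegral_iff_ofReal (Eventually.of_forall hg0)).2
      (hlint.trans_lt ENNReal.ofReal_lt_top)⟩
  refine ⟨hint, ?_⟩
  rw [integral_eq_lintegral_of_nonneg_ae (Eventually.of_forall hg0) hg.aestronglyMeasurable]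
  exact ENNReal.toReal_le_of_le_ofReal ((integral_nonneg hg0).trans (hC 0)) hlint

lemma abs_integral_sub_le_of_abs_sub_le {μ : Measure ℝ} {f g G : ℝ → ℝ} {δ : ℝ}
    (hf : Integrable f μ) (hg : Integrable g μ) (hG : Integrable G μ)
    (hfg : ∀ x, |f x - g x| ≤ δ * G x) : |∫ x, f x ∂μ - ∫ x, g x ∂μ| ≤ δ * ∫ x, G x ∂μ := by
  rw [← integral_sub hf hg, ← integral_const_mul]
  exact (abs_integral_le_integral_abs).trans (integral_mono (hf.sub hg).abs (hG.const_mul δ) hfg)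

lemma VagueTendsto.tendsto_integral_of_approx (hv : VagueTendsto ηn η) {f G : ℝ → ℝ} {C : ℝ}
    (hfn : ∀ n, Integrable f (ηn n)) (hf : Integrable f η)
    (hGn : ∀ n, Integrable G (ηn n)) (hG : Integrable G η)
    (hCn : ∀ n, ∫ x, G x ∂(ηn n) ≤ C) (hC : ∫ x, G x ∂η ≤ C)
    (happrox : ∀ δ > 0, ∃ g : ℝ → ℝ, Continuous g ∧ HasCompactSupport g ∧ (∀ x, 0 ≤ g x) ∧
      ∀ x, |f x - g x| ≤ δ * G x) :
    Tendsto (fun n ↦ ∫ x, f x ∂(ηn n)) atTop (𝓝 (∫ x, f x ∂η)) := by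
  refine Metric.tendsto_atTop.2 fun ε hε ↦ ?_
  set δ := ε / (3 * (|C| + 1))
  have hδ : 0 < δ := by positivity
  have hδC : δ * C < ε / 3 := by
    have : δ * (|C| + 1) = ε / 3 := by simp only [δ]; field_simp
    nlinarith [le_abs_self C]
  obtain ⟨g, hgc, hgcs, hg0, hfg⟩ := happrox δ hδ
  have hgi : ∀ μ : Measure ℝ, [IsFiniteMeasureOnCompacts μ] → Integrable g μ :=
    fun _ _ ↦ hgc.integrable_of_hasCompactSupport hgcs
  obtain ⟨N, hN⟩ := Metric.tendsto_atTop.1 (hv g hgc hgcs hg0) (ε / 3) (by positivity)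
  refine ⟨N, fun n hn ↦ ?_⟩
  have h1 := abs_integral_sub_le_of_abs_sub_le (hfn n) (hgi _) (hGn n) hfg
  have h2 := abs_integral_sub_le_of_abs_sub_le hf (hgi _) hG hfg
  have h3 := hN n hn
  rw [Real.dist_eq] at h3 ⊢
  rw [abs_sub_comm] at h2
  have t1 := abs_sub_le (∫ x, f x ∂ηn n) (∫ x, g x ∂ηn n) (∫ x, f x ∂η)
  have t2 := abs_sub_le (∫ x, g x ∂ηn n) (∫ x, g x ∂η) (∫ x, f x ∂η)
  linarith [mul_le_mul_of_nonneg_left (hCn n) hδ.le, mul_le_mul_of_nonneg_left hC hδ.le]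

end VagueIntegrals

section AlphaIntegrals

variable {μ : Measure ℝ} [IsFiniteMeasureOnCompacts μ]

lemma exp_mul_measureReal_Icc_le_integral_alphaF {k : ℕ} (hint : Integrable (alphaF k) μ)
    {m : ℕ} (hm : 2 ≤ m) :
    Real.exp (-(m : ℝ) ^ 2 / k) * μ.real (Icc (-(m : ℝ)) (-(m : ℝ) + 1)) ≤ ∫ x, alphaF k x ∂μ := by
  have hm2 : (2 : ℝ) ≤ m := by exact_mod_cast hm
  calc _ ≤ ∫ x in Icc (-(m : ℝ)) (-(m : ℝ) + 1), alphaF k x ∂μ :=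
        setIntegral_ge_of_const_le_real measurableSet_Icc isCompact_Icc.measure_lt_top.ne
          (fun x hx ↦ exp_neg_sq_le_alphaF k (by linarith [hx.2]) hx.1) hint.integrableOn
    _ ≤ ∫ x, alphaF k x ∂μ := setIntegral_le_integral hint (Eventually.of_forall (alphaF_nonneg k))

lemma tendsto_log_measure_Icc_of_integrable_alphaF (h : ∀ k : ℕ, 1 ≤ k → Integrable (alphaF k) μ) :
    Tendsto (fun m : ℕ ↦ 1 / (m : ℝ) ^ 2 *
      Real.log (max (μ (Icc (-(m : ℝ)) (-(m : ℝ) + 1))).toReal 1)) atTop (𝓝 0) := by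
  refine tendsto_log_div_sq_of_le_exp fun ε hε ↦ ?_
  have hk : 1 ≤ ⌈1 / ε⌉₊ := Nat.one_le_ceil_iff.2 (by positivity)
  have hkε : 1 / (⌈1 / ε⌉₊ : ℝ) ≤ ε :=
    (one_div_le (by exact_mod_cast hk) hε).2 (Nat.le_ceil _)
  refine ⟨∫ x, alphaF ⌈1 / ε⌉₊ x ∂μ, ?_⟩
  filter_upwards [eventually_ge_atTop 2] with m hm
  have hwin := exp_mul_measureReal_Icc_le_integral_alphaF (h _ hk) hm
  rw [measureReal_def] at hwin
  calc (μ (Icc (-(m : ℝ)) (-(m : ℝ) + 1))).toReal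
      = Real.exp ((m : ℝ) ^ 2 / ⌈1 / ε⌉₊) * (Real.exp (-(m : ℝ) ^ 2 / ⌈1 / ε⌉₊)
          * (μ (Icc (-(m : ℝ)) (-(m : ℝ) + 1))).toReal) := by
        rw [← mul_assoc, ← Real.exp_add, neg_div, add_neg_cancel, Real.exp_zero, one_mul]
    _ ≤ Real.exp ((m : ℝ) ^ 2 / ⌈1 / ε⌉₊) * ∫ x, alphaF ⌈1 / ε⌉₊ x ∂μ := by gcongr
    _ ≤ Real.exp (ε * m ^ 2) * ∫ x, alphaF ⌈1 / ε⌉₊ x ∂μ := by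
        gcongr
        · exact integral_nonneg (alphaF_nonneg _)
        · rw [div_eq_mul_one_div, mul_comm]; gcongr
    _ = _ := mul_comm _ _

end AlphaIntegrals

lemma exists_approx_alphaF {k : ℕ} (hk : 1 ≤ k) {δ : ℝ} (hδ : 0 < δ) :
    ∃ g : ℝ → ℝ, Continuous g ∧ HasCompactSupport g ∧ (∀ x, 0 ≤ g x) ∧
      ∀ x, |alphaF k x - g x| ≤ δ * alphaF (2 * k) x := by
  have hk0 : (0 : ℝ) < 2 * k := by positivity
  have hlim : Tendsto (fun t : ℝ ↦ Real.exp (-t ^ 2 / (2 * k))) atTop (𝓝 0) :=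
    Real.tendsto_exp_atBot.comp <| (tendsto_neg_atTop_atBot.comp
      (tendsto_pow_atTop two_ne_zero)).atBot_div_const hk0
  obtain ⟨t, htδ, ht⟩ := ((hlim.eventually (ge_mem_nhds hδ)).and (eventually_ge_atTop 1)).exists
  obtain ⟨χ, hχ1, -, hχc, hχ01⟩ := exists_continuous_one_zero_of_isCompact
    (isCompact_Icc (a := -t) (b := 0)) isClosed_empty (disjoint_empty _)
  refine ⟨fun x ↦ χ x * alphaF k x, χ.continuous.mul (continuous_alphaF k), hχc.mul_right,
    fun x ↦ mul_nonneg (hχ01 x).1 (alphaF_nonneg k x), fun x ↦ ?_⟩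
  have hdiff : alphaF k x - χ x * alphaF k x = (1 - χ x) * alphaF k x := by ring
  rw [hdiff, abs_of_nonneg (mul_nonneg (sub_nonneg.2 (hχ01 x).2) (alphaF_nonneg k x))]
  rcases lt_or_ge x (-t) with hxt | hxt
  · calc (1 - χ x) * alphaF k x ≤ alphaF k x :=
          mul_le_of_le_one_left (alphaF_nonneg k x) (by linarith [(hχ01 x).1])
      _ ≤ Real.exp (-t ^ 2 / (2 * k)) * alphaF (2 * k) x :=
          alphaF_le_exp_mul_alphaF_two_mul k ht hxt.le
      _ ≤ δ * alphaF (2 * k) x := by gcongr; exact alphaF_nonneg _ _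
  · rcases le_or_gt x 0 with hx0 | hx0
    · simp [hχ1 ⟨hxt, hx0⟩, mul_nonneg hδ.le (alphaF_nonneg _ _)]
    · simp [alphaF_of_nonneg k hx0.le, mul_nonneg hδ.le (alphaF_nonneg _ _)]

section Maxima

variable {ηn : ℕ → Measure ℝ} {η : Measure ℝ}

lemma VagueTendsto.ne_zero [∀ n, IsFiniteMeasureOnCompacts (ηn n)] (hv : VagueTendsto ηn η)
    (hp : ∀ n, IsPointMeasure (ηn n)) (h0 : ∀ n, ηn n ≠ 0) {M c : ℝ}
    (hM : ∀ n, ηn n (Ioi M) = 0) (hc : ∃ᶠ n in atTop, c ≤ maxM (ηn n)) : η ≠ 0 := by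
  have hfreq : ∃ᶠ n in atTop, 1 ≤ ηn n (Icc (c - 1) M) := hc.mono fun n hn ↦
    (hp n).one_le_measure_Icc ((lt_maxM_iff (h0 n) (hM n)).1 (by linarith)) (hM n)
  intro h
  exact hv.measure_ne_zero_of_frequently isCompact_Icc isOpen_univ (subset_univ _) hfreq
    (by simp [h])

lemma VagueTendsto.tendsto_maxM [∀ n, IsFiniteMeasureOnCompacts (ηn n)]
    [IsFiniteMeasureOnCompacts η] (hv : VagueTendsto ηn η) (hp : ∀ n, IsPointMeasure (ηn n))
    (h0n : ∀ n, ηn n ≠ 0) (h0 : η ≠ 0) {M : ℝ} (hMn : ∀ n, ηn n (Ioi M) = 0)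
    (hM : η (Ioi M) = 0) : Tendsto (fun n ↦ maxM (ηn n)) atTop (𝓝 (maxM η)) := by
  have hmax : η (Ioi (maxM η)) = 0 := (maxM_le_iff h0 hM).1 le_rfl
  refine tendsto_order.2 ⟨fun a ha ↦ ?_, fun a ha ↦ ?_⟩
  · obtain ⟨b, hab, hb⟩ := exists_between ha
    have hK := measure_Icc_ne_zero ((lt_maxM_iff h0 hM).1 hb) hmax
    filter_upwards [hv.eventually_measure_ne_zero isCompact_Icc isOpen_Ioi
      (fun x hx ↦ hab.trans_le hx.1) hK] with n hn
    exact (lt_maxM_iff (h0n n) (hMn n)).2 hn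
  · obtain ⟨b, hb, hba⟩ := exists_between ha
    have hfreq : ¬∃ᶠ n in atTop, a ≤ maxM (ηn n) := fun hfreq ↦
      hv.measure_ne_zero_of_frequently isCompact_Icc isOpen_Ioi (fun x hx ↦ hb.trans_le hx.1)
        (hfreq.mono fun n hn ↦ (hp n).one_le_measure_Icc
          ((lt_maxM_iff (h0n n) (hMn n)).1 (hba.trans_le hn)) (hMn n)) hmax
    exact (not_frequently.1 hfreq).mono fun n ↦ not_le.1

end Maxima

/-- Lemma 3.1: vague convergence together with boundedness of the `α_k`-integrals and
non-degeneracy of the maxima implies membership in `𝓜₂` and `d₂`-convergence. -/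
theorem vague_to_d2_convergence
    (ηn : ℕ → Measure ℝ) (η : Measure ℝ)
    (hn : ∀ n, MemM2 (ηn n)) (hη : IsPointMeasure η)
    (hvague : VagueTendsto ηn η)
    (halpha : ∀ k : ℕ, 1 ≤ k → ∃ C : ℝ, ∀ n, ∫ x, alphaF k x ∂(ηn n) ≤ C)
    (hsup : ∃ M : ℝ, ∀ n, maxM (ηn n) ≤ M)
    (hnotminf : ∃ c : ℝ, ∃ᶠ n in atTop, c ≤ maxM (ηn n)) :
    MemM2 η ∧ D2Tendsto ηn η := by
  obtain ⟨M, hM⟩ := hsup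
  obtain ⟨c, hc⟩ := hnotminf
  choose! C hC using halpha
  have := hη.isFiniteMeasureOnCompacts
  have (n : ℕ) := (hn n).1.isFiniteMeasureOnCompacts
  have hMn : ∀ n, ηn n (Ioi M) = 0 := fun n ↦ by
    obtain ⟨b, hb⟩ := (hn n).1.exists_measure_Ioi_eq_zero (hn n).2.2.1.ne
    exact (maxM_le_iff (hn n).2.1 hb).1 (hM n)
  have hηM : η (Ioi M) = 0 := hvague.measure_eq_zero isOpen_Ioi hMn
  have hη0 : η ≠ 0 := hvague.ne_zero (fun n ↦ (hn n).1) (fun n ↦ (hn n).2.1) hMn hc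
  have hαη (k : ℕ) (hk : 1 ≤ k) : Integrable (alphaF k) η ∧ ∫ x, alphaF k x ∂η ≤ C k :=
    hvague.integrable_and_integral_le (continuous_alphaF k) (alphaF_nonneg k)
      (fun n ↦ (hn n).integrable_alphaF hk) (hC k hk)
  have hIci : η (Ici 0) < ∞ := (measure_mono (Ici_subset_Icc_union_Ioi (b := M))).trans_lt <|
    (measure_union_le _ _).trans_lt (by simp [hηM, isCompact_Icc.measure_lt_top])
  refine ⟨⟨hη, hη0, hIci, tendsto_log_measure_Icc_of_integrable_alphaF fun k hk ↦ (hαη k hk).1⟩,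
    hvague, hvague.tendsto_maxM (fun n ↦ (hn n).1) (fun n ↦ (hn n).2.1) hη0 hMn hηM,
    fun k hk ↦ ?_⟩
  have hk2 : 1 ≤ 2 * k := by omega
  exact hvague.tendsto_integral_of_approx (fun n ↦ (hn n).integrable_alphaF hk) (hαη k hk).1
    (fun n ↦ (hn n).integrable_alphaF hk2) (hαη _ hk2).1 (hC _ hk2) (hαη _ hk2).2
    fun δ hδ ↦ exists_approx_alphaF hk hδ
end
end

section
/- Let η be a locally finite Borel measure on ℝ. Then the following are equivalent: (i) lim_{m→∞} (1/m²)·log(max(η([-m,-m+1]), 1)) = 0, the limit taken over positive integers m; (ii) for every λ > 0, ∫_{(-∞,0]} e^{-λx²} η(dx) < ∞. -/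
/-!
Both conditions say that for every `λ > 0`, eventually `η [-m, -m + 1] ≤ exp (λ m²)`; for the
logarithmic limit this is a rewriting. Since `x² ≥ m² / 2 - 1` on `[-m, -m + 1]`, that growth bound
makes `∫_{x ≤ 0} e^{-λx²} dη ≤ e^λ ∑ₘ e^{-λm²/2} η [-m, -m + 1]` converge. Conversely the integral
bounds `e^{-λm²} η [-m, -m + 1]`, which gives `η [-m, -m + 1] = O(e^{λm²})` for every `λ`, and
comparing `λ / 2` with `λ` turns this into `o(e^{λm²})`.
-/

open MeasureTheory Filter Set Topology Asymptotics

def SubgaussianGrowth (a : ℕ → ℝ) : Prop :=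
  ∀ l > 0, ∀ᶠ m : ℕ in atTop, a m ≤ Real.exp (l * m ^ 2)

theorem tendsto_one_div_sq_mul_log_max_one_iff (a : ℕ → ℝ) :
    Tendsto (fun m : ℕ => (1 / (m : ℝ) ^ 2) * Real.log (max (a m) 1)) atTop (𝓝 0) ↔
      SubgaussianGrowth a := by
  have hnonneg (m : ℕ) : 0 ≤ (1 / (m : ℝ) ^ 2) * Real.log (max (a m) 1) :=
    mul_nonneg (by positivity) (Real.log_nonneg (le_max_right _ _))
  have hle_iff (l : ℝ) (hl : 0 < l) (m : ℕ) (hm : 1 ≤ m) :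
      (1 / (m : ℝ) ^ 2) * Real.log (max (a m) 1) ≤ l ↔ a m ≤ Real.exp (l * m ^ 2) := by
    have hm2 : (0 : ℝ) < (m : ℝ) ^ 2 := by positivity
    rw [one_div_mul_eq_div, div_le_iff₀ hm2, Real.log_le_iff_le_exp (by positivity), max_le_iff,
      and_iff_left (Real.one_le_exp (by positivity))]
  simp only [(nhds_basis_Icc_pos (0 : ℝ)).tendsto_right_iff, zero_sub, zero_add, mem_Icc]
  refine forall₂_congr fun l hl => eventually_congr ?_
  filter_upwards [eventually_ge_atTop 1] with m hm
  rw [and_iff_right (by linarith [hnonneg m]), hle_iff l hl m hm]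

theorem SubgaussianGrowth.of_isBigO {a : ℕ → ℝ}
    (h : ∀ l > 0, a =O[atTop] fun m : ℕ => Real.exp (l * m ^ 2)) : SubgaussianGrowth a := by
  intro l hl
  have hlittle : a =o[atTop] fun m : ℕ => Real.exp (l * m ^ 2) :=
    (h (l / 2) (by positivity)).trans_isLittleO <| Real.isLittleO_exp_comp_exp_comp.2 <| by
      have hsq : Tendsto (fun m : ℕ => (m : ℝ) ^ 2) atTop atTop :=
        (tendsto_pow_atTop two_ne_zero).comp tendsto_natCast_atTop_atTop
      refine (hsq.const_mul_atTop (half_pos hl)).congr fun m => ?_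
      ring
  filter_upwards [hlittle.bound one_pos] with m hm
  simpa [Real.norm_eq_abs, abs_of_pos (Real.exp_pos _)] using (le_abs_self _).trans hm

theorem SubgaussianGrowth.summable_exp_neg_mul_sq_mul {a : ℕ → ℝ} (ha : SubgaussianGrowth a)
    (ha₀ : ∀ m, 0 ≤ a m) {l : ℝ} (hl : 0 < l) :
    Summable fun m : ℕ => Real.exp (-l * m ^ 2) * a m := by
  have hg : Summable fun m : ℕ => Real.exp (-(l / 2) * ((m : ℝ) ^ 2)) :=
    Real.summable_exp_nat_mul_of_ge (by linarith) fun m => by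
      exact_mod_cast Nat.le_self_pow two_ne_zero m
  refine hg.of_norm_bounded_eventually_nat ?_
  filter_upwards [ha (l / 2) (by positivity)] with m hm
  rw [Real.norm_of_nonneg (by positivity [ha₀ m])]
  calc Real.exp (-l * m ^ 2) * a m ≤ Real.exp (-l * m ^ 2) * Real.exp (l / 2 * m ^ 2) := by gcongr
    _ = Real.exp (-(l / 2) * m ^ 2) := by rw [← Real.exp_add]; ring_nf

section Measure

variable (η : Measure ℝ)

theorem ofReal_exp_mul_measure_Icc_le_lintegral_Iic {l t : ℝ} (hl : 0 ≤ l) (ht : 1 ≤ t) :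
    ENNReal.ofReal (Real.exp (-l * t ^ 2)) * η (Icc (-t) (-t + 1)) ≤
      ∫⁻ x in Iic 0, ENNReal.ofReal (Real.exp (-l * x ^ 2)) ∂η := by
  calc ENNReal.ofReal (Real.exp (-l * t ^ 2)) * η (Icc (-t) (-t + 1))
      = ∫⁻ _ in Icc (-t) (-t + 1), ENNReal.ofReal (Real.exp (-l * t ^ 2)) ∂η :=
        (setLIntegral_const _ _).symm
    _ ≤ ∫⁻ x in Icc (-t) (-t + 1), ENNReal.ofReal (Real.exp (-l * x ^ 2)) ∂η := by
        refine setLIntegral_mono (by fun_prop) fun x ⟨hx₁, hx₂⟩ => ?_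
        have hsq : x ^ 2 ≤ t ^ 2 := sq_le_sq' hx₁ (by linarith)
        exact ENNReal.ofReal_le_ofReal (Real.exp_le_exp.2 (by nlinarith))
    _ ≤ ∫⁻ x in Iic 0, ENNReal.ofReal (Real.exp (-l * x ^ 2)) ∂η :=
        lintegral_mono_set fun x hx => by simp only [mem_Iic]; linarith [hx.2]

theorem lintegral_Iic_exp_neg_mul_sq_le_tsum {l : ℝ} (hl : 0 ≤ l) :
    ∫⁻ x in Iic 0, ENNReal.ofReal (Real.exp (-l * x ^ 2)) ∂η ≤
      ∑' m : ℕ, ENNReal.ofReal (Real.exp l * Real.exp (-(l / 2) * m ^ 2)) *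
        η (Icc (-(m : ℝ)) (-(m : ℝ) + 1)) := by
  have hcover : Iic (0 : ℝ) ⊆ ⋃ m : ℕ, Icc (-(m : ℝ)) (-(m : ℝ) + 1) := fun x hx =>
    mem_iUnion.2 ⟨⌈-x⌉₊, by
      constructor <;>
        linarith [Nat.le_ceil (-x), Nat.ceil_lt_add_one (neg_nonneg.2 (mem_Iic.1 hx))]⟩
  calc ∫⁻ x in Iic 0, ENNReal.ofReal (Real.exp (-l * x ^ 2)) ∂η
      ≤ ∫⁻ x in ⋃ m : ℕ, Icc (-(m : ℝ)) (-(m : ℝ) + 1),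
          ENNReal.ofReal (Real.exp (-l * x ^ 2)) ∂η := lintegral_mono_set hcover
    _ ≤ ∑' m : ℕ, ∫⁻ x in Icc (-(m : ℝ)) (-(m : ℝ) + 1),
          ENNReal.ofReal (Real.exp (-l * x ^ 2)) ∂η := lintegral_iUnion_le _ _
    _ ≤ _ := by
        refine ENNReal.tsum_le_tsum fun m => ?_
        refine (setLIntegral_mono measurable_const fun x hx => ?_).trans_eq
          (setLIntegral_const _ _)
        obtain ⟨hx₁, hx₂⟩ := hx
        have hm : (0 : ℝ) ≤ m := m.cast_nonneg
        have hsq : (m : ℝ) ^ 2 / 2 - 1 ≤ x ^ 2 := by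
          nlinarith [sq_nonneg ((m : ℝ) + 2 * x), mul_nonneg (sub_nonneg.2 hx₂) (sub_nonneg.2 hx₁)]
        rw [← Real.exp_add]
        exact ENNReal.ofReal_le_ofReal (Real.exp_le_exp.2 (by nlinarith))

theorem lintegral_Iic_exp_neg_mul_sq_lt_top [IsLocallyFiniteMeasure η]
    (hη : SubgaussianGrowth fun m : ℕ => (η (Icc (-(m : ℝ)) (-(m : ℝ) + 1))).toReal)
    {l : ℝ} (hl : 0 < l) :
    ∫⁻ x in Iic 0, ENNReal.ofReal (Real.exp (-l * x ^ 2)) ∂η < ⊤ := by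
  have hsum : Summable fun m : ℕ => Real.exp l *
      (Real.exp (-(l / 2) * m ^ 2) * (η (Icc (-(m : ℝ)) (-(m : ℝ) + 1))).toReal) :=
    (hη.summable_exp_neg_mul_sq_mul (fun _ => ENNReal.toReal_nonneg) (half_pos hl)).mul_left _
  calc ∫⁻ x in Iic 0, ENNReal.ofReal (Real.exp (-l * x ^ 2)) ∂η
      ≤ ∑' m : ℕ, ENNReal.ofReal (Real.exp l * Real.exp (-(l / 2) * m ^ 2)) *
          η (Icc (-(m : ℝ)) (-(m : ℝ) + 1)) := lintegral_Iic_exp_neg_mul_sq_le_tsum η hl.le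
    _ = ENNReal.ofReal (∑' m : ℕ, Real.exp l *
          (Real.exp (-(l / 2) * m ^ 2) * (η (Icc (-(m : ℝ)) (-(m : ℝ) + 1))).toReal)) := by
        rw [ENNReal.ofReal_tsum_of_nonneg (fun _ => by positivity) hsum]
        refine tsum_congr fun m => ?_
        rw [← mul_assoc, ENNReal.ofReal_mul' ENNReal.toReal_nonneg,
          ENNReal.ofReal_toReal isCompact_Icc.measure_lt_top.ne]
    _ < ⊤ := ENNReal.ofReal_lt_top

theorem subgaussianGrowth_of_lintegral_Iic_exp_neg_mul_sq_lt_top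
    (h : ∀ l > 0, ∫⁻ x in Iic 0, ENNReal.ofReal (Real.exp (-l * x ^ 2)) ∂η < ⊤) :
    SubgaussianGrowth fun m : ℕ => (η (Icc (-(m : ℝ)) (-(m : ℝ) + 1))).toReal := by
  refine .of_isBigO fun l hl => .of_bound
    (∫⁻ x in Iic 0, ENNReal.ofReal (Real.exp (-l * x ^ 2)) ∂η).toReal ?_
  filter_upwards [eventually_ge_atTop 1] with m hm
  have hmass := ENNReal.toReal_mono (h l hl).ne <|
    ofReal_exp_mul_measure_Icc_le_lintegral_Iic η hl.le (t := m) (by exact_mod_cast hm)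
  rw [ENNReal.toReal_mul, ENNReal.toReal_ofReal (Real.exp_nonneg _), neg_mul, Real.exp_neg,
    inv_mul_eq_div, div_le_iff₀ (Real.exp_pos _)] at hmass
  rwa [Real.norm_of_nonneg ENNReal.toReal_nonneg, Real.norm_of_nonneg (Real.exp_nonneg _)]

end Measure

/-- For a locally finite Borel measure `η` on `ℝ`, the subgaussian growth condition
`(1/m²)·log(max(η([-m,-m+1]),1)) → 0` is equivalent to
`∫_{(-∞,0]} e^{-λx²} η(dx) < ∞` for every `λ > 0`. -/
theorem subgaussian_growth_iff_gaussian_integrability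
    (η : Measure ℝ) [IsLocallyFiniteMeasure η] :
    Tendsto (fun m : ℕ =>
        (1 / (m : ℝ) ^ 2) *
          Real.log (max ((η (Set.Icc (-(m:ℝ)) (-(m:ℝ) + 1))).toReal) 1))
      atTop (nhds 0)
    ↔
    ∀ l : ℝ, 0 < l →
      (∫⁻ x in Set.Iic (0:ℝ), ENNReal.ofReal (Real.exp (-l * x ^ 2)) ∂η) < ⊤ := by
  rw [tendsto_one_div_sq_mul_log_max_one_iff]
  exact ⟨fun h _ hl => lintegral_Iic_exp_neg_mul_sq_lt_top η h hl,
    subgaussianGrowth_of_lintegral_Iic_exp_neg_mul_sq_lt_top η⟩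
end

section
/- Let ν be a locally finite Borel measure on [0,∞) and let ρ > 0. If sup_{x≥1} ν([0,x])/x^ρ < ∞, then sup_{λ∈(0,1)} λ^ρ · ∫_{[0,∞)} e^{-λx} ν(dx) < ∞. -/
/-!
Cut `[0, ∞)` into the blocks `[n/λ, (n+1)/λ)`. On the `n`-th block `e^{-λx} ≤ e^{-n}`, and the block
lies in `[0, (n+1)/λ]`, whose mass is at most `C ((n+1)/λ)^ρ`. The factor `λ^ρ` cancels the `λ^{-ρ}`,
leaving the `λ`-free convergent series `C ∑ e^{-n} (n+1)^ρ`.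
-/

open MeasureTheory Filter Set

noncomputable section

open Real ENNReal

lemma summable_exp_neg_mul_add_one_rpow (ρ : ℝ) :
    Summable fun n : ℕ => exp (-n) * ((n : ℝ) + 1) ^ ρ := by
  set k := ⌈ρ⌉₊
  have hk : Summable fun n : ℕ => ((n : ℝ) + 1) ^ k * exp (-1 * ((n : ℝ) + 1)) := by
    simpa using (summable_nat_add_iff 1).2 (summable_pow_mul_exp_neg_nat_mul k one_pos)
  refine (hk.mul_left (exp 1)).of_nonneg_of_le (fun n => by positivity) fun n => ?_
  calc exp (-n) * ((n : ℝ) + 1) ^ ρ ≤ exp (-n) * ((n : ℝ) + 1) ^ (k : ℝ) := by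
        gcongr
        · linarith [n.cast_nonneg (α := ℝ)]
        · exact Nat.le_ceil ρ
    _ = exp 1 * (((n : ℝ) + 1) ^ k * exp (-1 * ((n : ℝ) + 1))) := by
        rw [Real.rpow_natCast, mul_left_comm, ← exp_add]
        ring_nf

lemma Ici_zero_subset_iUnion_Ico_div {l : ℝ} (hl : 0 < l) :
    Ici (0 : ℝ) ⊆ ⋃ n : ℕ, Ico ((n : ℝ) / l) (((n : ℝ) + 1) / l) := by
  intro x hx
  simp only [mem_iUnion, mem_Ico, div_le_iff₀ hl, lt_div_iff₀ hl]
  refine ⟨⌊l * x⌋₊, ?_, ?_⟩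
  · simpa [mul_comm] using Nat.floor_le (mul_nonneg hl.le hx)
  · simpa [mul_comm] using Nat.lt_floor_add_one (l * x)

lemma lintegral_Ici_exp_neg_mul_le_tsum (ν : Measure ℝ) {l : ℝ} (hl : 0 < l) :
    ∫⁻ x in Ici 0, ENNReal.ofReal (exp (-l * x)) ∂ν
      ≤ ∑' n : ℕ, ENNReal.ofReal (exp (-n)) * ν (Icc 0 (((n : ℝ) + 1) / l)) := by
  have hblock : ∀ n : ℕ, ∫⁻ x in Ico ((n : ℝ) / l) (((n : ℝ) + 1) / l),
      ENNReal.ofReal (exp (-l * x)) ∂ν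
        ≤ ENNReal.ofReal (exp (-n)) * ν (Icc 0 (((n : ℝ) + 1) / l)) := by
    intro n
    calc _ ≤ ∫⁻ _ in Ico ((n : ℝ) / l) (((n : ℝ) + 1) / l), ENNReal.ofReal (exp (-n)) ∂ν := by
          refine setLIntegral_mono measurable_const fun x hx => ?_
          have hnx : (n : ℝ) ≤ x * l := (div_le_iff₀ hl).1 hx.1
          exact ENNReal.ofReal_le_ofReal (exp_le_exp.2 (by linarith))
      _ ≤ ENNReal.ofReal (exp (-n)) * ν (Icc 0 (((n : ℝ) + 1) / l)) := by
          rw [setLIntegral_const]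
          exact mul_le_mul_right (measure_mono (Ico_subset_Icc_self.trans
            (Icc_subset_Icc_left (by positivity)))) _
  calc _ ≤ ∫⁻ x in ⋃ n : ℕ, Ico ((n : ℝ) / l) (((n : ℝ) + 1) / l),
        ENNReal.ofReal (exp (-l * x)) ∂ν := lintegral_mono_set (Ici_zero_subset_iUnion_Ico_div hl)
    _ ≤ _ := (lintegral_iUnion_le _ _).trans (ENNReal.tsum_le_tsum hblock)

lemma measure_Icc_le_ofReal_mul_rpow (ν : Measure ℝ) [IsLocallyFiniteMeasure ν] {ρ C x : ℝ}
    (hx : 0 < x) (h : (ν (Icc 0 x)).toReal / x ^ ρ ≤ C) :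
    ν (Icc 0 x) ≤ ENNReal.ofReal (C * x ^ ρ) := by
  rw [← ENNReal.ofReal_toReal isCompact_Icc.measure_lt_top.ne]
  exact ENNReal.ofReal_le_ofReal ((div_le_iff₀ (by positivity)).1 h)

lemma ofReal_rpow_mul_measure_Icc_div_le (ν : Measure ℝ) [IsLocallyFiniteMeasure ν]
    {ρ C l y : ℝ} (hC : ∀ x : ℝ, 1 ≤ x → (ν (Icc 0 x)).toReal / x ^ ρ ≤ C)
    (hl : 0 < l) (hly : l ≤ y) :
    ENNReal.ofReal (l ^ ρ) * ν (Icc 0 (y / l)) ≤ ENNReal.ofReal (C * y ^ ρ) := by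
  have hy : 0 < y := hl.trans_le hly
  calc _ ≤ ENNReal.ofReal (l ^ ρ) * ENNReal.ofReal (C * (y / l) ^ ρ) :=
        mul_le_mul_right (measure_Icc_le_ofReal_mul_rpow ν (by positivity)
          (hC _ ((one_le_div hl).2 hly))) _
    _ = ENNReal.ofReal (C * y ^ ρ) := by
        rw [← ENNReal.ofReal_mul (by positivity), div_rpow hy.le hl.le]
        field_simp

theorem laplace_bounded_of_polynomial_growth_general
    (ν : Measure ℝ) [IsLocallyFiniteMeasure ν]
    (ρ : ℝ)
    (hbdd : ∃ C : ℝ, ∀ x : ℝ, 1 ≤ x → (ν (Set.Icc 0 x)).toReal / x ^ ρ ≤ C) :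
    ∃ C' : ℝ, ∀ l ∈ Set.Ioo (0:ℝ) 1,
      ENNReal.ofReal (l ^ ρ) *
          (∫⁻ x in Set.Ici (0:ℝ), ENNReal.ofReal (Real.exp (-l * x)) ∂ν)
        ≤ ENNReal.ofReal C' := by
  obtain ⟨C, hC⟩ := hbdd
  have hC0 : 0 ≤ C := (div_nonneg toReal_nonneg (by positivity)).trans (hC 1 le_rfl)
  refine ⟨C * ∑' n : ℕ, exp (-n) * ((n : ℝ) + 1) ^ ρ, ?_⟩
  rintro l ⟨hl0, hl1⟩
  calc _ ≤ ENNReal.ofReal (l ^ ρ) *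
        ∑' n : ℕ, ENNReal.ofReal (exp (-n)) * ν (Icc 0 (((n : ℝ) + 1) / l)) :=
        mul_le_mul_right (lintegral_Ici_exp_neg_mul_le_tsum ν hl0) _
    _ = ∑' n : ℕ, ENNReal.ofReal (exp (-n)) *
        (ENNReal.ofReal (l ^ ρ) * ν (Icc 0 (((n : ℝ) + 1) / l))) := by
        rw [← ENNReal.tsum_mul_left]
        simp only [mul_left_comm]
    _ ≤ ∑' n : ℕ, ENNReal.ofReal (exp (-n)) * ENNReal.ofReal (C * ((n : ℝ) + 1) ^ ρ) :=
        ENNReal.tsum_le_tsum fun n => mul_le_mul_right (ofReal_rpow_mul_measure_Icc_div_le ν hC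
          hl0 (by linarith [n.cast_nonneg (α := ℝ)])) _
    _ = ENNReal.ofReal (C * ∑' n : ℕ, exp (-n) * ((n : ℝ) + 1) ^ ρ) := by
        rw [← tsum_mul_left, ENNReal.ofReal_tsum_of_nonneg (fun n => by positivity)
          ((summable_exp_neg_mul_add_one_rpow ρ).mul_left C)]
        simp only [← ENNReal.ofReal_mul (exp_pos _).le, mul_left_comm]

/-- If `ν([0,x])/x^ρ` is bounded for `x ≥ 1`, then `λ^ρ ∫ e^{-λx} ν(dx)` is bounded
for `λ ∈ (0,1)`. -/
theorem laplace_bounded_of_polynomial_growth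
    (ν : Measure ℝ) [IsLocallyFiniteMeasure ν]
    (hsupp : ν (Set.Iio 0) = 0)
    (ρ : ℝ) (hρ : 0 < ρ)
    (hbdd : ∃ C : ℝ, ∀ x : ℝ, 1 ≤ x → (ν (Set.Icc 0 x)).toReal / x ^ ρ ≤ C) :
    ∃ C' : ℝ, ∀ l ∈ Set.Ioo (0:ℝ) 1,
      ENNReal.ofReal (l ^ ρ) *
          (∫⁻ x in Set.Ici (0:ℝ), ENNReal.ofReal (Real.exp (-l * x)) ∂ν)
        ≤ ENNReal.ofReal C' :=
  laplace_bounded_of_polynomial_growth_general ν ρ hbdd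

end
end

section
/- Let R be a nonnegative real random variable and let B ⊆ (0,∞) be a set having a limit point in (0,∞), i.e. there exists b ∈ (0,∞) belonging to the closure of B \ {b}. If E[exp(−√(π/2)·z·R)] = e^{−z} for every z ∈ B, then R = √(2/π) almost surely. -/
/-!
With `c = √(π/2)` and `Y = 1 - c R`, the hypothesis says that the moment generating function
`z ↦ E[exp (z Y)]` equals `1` on `B`; it also equals `1` at `0`. Since `B` has a limit point it
contains two points `0 < s < u`, and strict convexity of `exp` turns
`exp (s Y) ≤ (1 - s/u) + (s/u) exp (u Y)`, an inequality whose two sides have the same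
expectation, into an equality almost surely, which forces `Y = 0` almost surely.
-/

open MeasureTheory ProbabilityTheory Real Set

theorem exp_mul_le_one_sub_add_mul_exp {t : ℝ} (ht₀ : 0 ≤ t) (ht₁ : t ≤ 1) (x : ℝ) :
    exp (t * x) ≤ 1 - t + t * exp x := by
  simpa using convexOn_exp.2 (mem_univ 0) (mem_univ x) (sub_nonneg.2 ht₁) ht₀ (by ring)

theorem exp_mul_lt_one_sub_add_mul_exp {t x : ℝ} (ht₀ : 0 < t) (ht₁ : t < 1) (hx : x ≠ 0) :
    exp (t * x) < 1 - t + t * exp x := by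
  simpa using
    strictConvexOn_exp.2 (mem_univ 0) (mem_univ x) hx.symm (sub_pos.2 ht₁) ht₀ (by ring)

theorem ProbabilityTheory.ae_eq_zero_of_mgf_eq_one {Ω : Type*} [MeasurableSpace Ω]
    {μ : Measure Ω} [IsProbabilityMeasure μ] {X : Ω → ℝ} {s u : ℝ} (hs : 0 < s) (hsu : s < u)
    (hXs : mgf X μ s = 1) (hXu : mgf X μ u = 1) : X =ᵐ[μ] 0 := by
  have hu : 0 < u := hs.trans hsu
  set t := s / u
  have ht₀ : 0 < t := div_pos hs hu
  have ht₁ : t < 1 := (div_lt_one hu).2 hsu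
  have hst : ∀ ω, s * X ω = t * (u * X ω) := fun ω => by
    rw [← mul_assoc, div_mul_cancel₀ s hu.ne']
  -- `mgf` is `0` at non-integrable points, so `mgf = 1` carries integrability.
  have hint_s : Integrable (fun ω => exp (s * X ω)) μ :=
    .of_integral_ne_zero (hXs.trans_ne one_ne_zero)
  have hint_u : Integrable (fun ω => exp (u * X ω)) μ :=
    .of_integral_ne_zero (hXu.trans_ne one_ne_zero)
  have hint_bound : Integrable (fun ω => 1 - t + t * exp (u * X ω)) μ :=
    (integrable_const _).add (hint_u.const_mul t)
  set gap : Ω → ℝ := fun ω => 1 - t + t * exp (u * X ω) - exp (s * X ω)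
  have hgap_nonneg : 0 ≤ gap := fun ω => by
    simpa [gap, hst ω] using exp_mul_le_one_sub_add_mul_exp ht₀.le ht₁.le (u * X ω)
  have hgap_integral : ∫ ω, gap ω ∂μ = 0 := by
    change ∫ ω, (1 - t + t * exp (u * X ω) - exp (s * X ω)) ∂μ = 0
    rw [integral_sub hint_bound hint_s,
      integral_add (integrable_const _) (hint_u.const_mul t), integral_const_mul]
    simp only [integral_const, probReal_univ, one_smul]
    rw [show ∫ ω, exp (u * X ω) ∂μ = 1 from hXu, show ∫ ω, exp (s * X ω) ∂μ = 1 from hXs]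
    ring
  have hgap_ae : gap =ᵐ[μ] 0 :=
    (integral_eq_zero_iff_of_nonneg hgap_nonneg
      (hint_bound.sub hint_s)).1 hgap_integral
  filter_upwards [hgap_ae] with ω hω
  by_contra hX
  have hlt := exp_mul_lt_one_sub_add_mul_exp ht₀ ht₁ (mul_ne_zero hu.ne' hX)
  simp only [gap, Pi.zero_apply, hst ω] at hω
  linarith

theorem laplace_identity_on_set_with_limit_point_general
    {Ω : Type*} [MeasurableSpace Ω] (P : Measure Ω) [IsProbabilityMeasure P]
    (R : Ω → ℝ)
    (B : Set ℝ) (hB : B ⊆ Set.Ioi 0)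
    (hlim : ∃ b ∈ Set.Ioi (0:ℝ), b ∈ closure (B \ {b}))
    (hlaplace : ∀ z ∈ B,
      ∫ ω, Real.exp (-(Real.sqrt (Real.pi / 2)) * z * R ω) ∂P = Real.exp (-z)) :
    ∀ᵐ ω ∂P, R ω = Real.sqrt (2 / Real.pi) := by
  set c := √(π / 2)
  have hmgf : ∀ z ∈ B, mgf (fun ω => 1 - c * R ω) P z = 1 := fun z hz => by
    calc mgf (fun ω => 1 - c * R ω) P z = ∫ ω, exp z * exp (-c * z * R ω) ∂P := by
          simp only [mgf, ← exp_add]; ring_nf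
      _ = 1 := by rw [integral_const_mul, hlaplace z hz, ← exp_add, add_neg_cancel, exp_zero]
  obtain ⟨b, -, hb⟩ := hlim
  obtain ⟨s, hs, u, hu, hsu⟩ := (Set.Infinite.of_accPt
    (accPt_principal_iff_clusterPt.2 (mem_closure_iff_clusterPt.1 hb))).nontrivial.exists_lt
  filter_upwards [ae_eq_zero_of_mgf_eq_one (hB hs) hsu (hmgf s hs) (hmgf u hu)] with ω hω
  rw [← inv_div, sqrt_inv]
  exact eq_inv_of_mul_eq_one_right (sub_eq_zero.1 hω).symm

/-- If the Laplace transform identity `E[exp(−√(π/2)·z·R)] = e^{−z}` holds for all `z` in a set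
`B ⊆ (0,∞)` having a limit point in `(0,∞)`, then `R = √(2/π)` almost surely. -/
theorem laplace_identity_on_set_with_limit_point
    {Ω : Type*} [MeasurableSpace Ω] (P : Measure Ω) [IsProbabilityMeasure P]
    (R : Ω → ℝ) (hR : Measurable R) (hRnonneg : ∀ ω, 0 ≤ R ω)
    (B : Set ℝ) (hB : B ⊆ Set.Ioi 0)
    (hlim : ∃ b ∈ Set.Ioi (0:ℝ), b ∈ closure (B \ {b}))
    (hlaplace : ∀ z ∈ B,
      ∫ ω, Real.exp (-(Real.sqrt (Real.pi / 2)) * z * R ω) ∂P = Real.exp (-z)) :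
    ∀ᵐ ω ∂P, R ω = Real.sqrt (2 / Real.pi) :=
  laplace_identity_on_set_with_limit_point_general P R B hB hlim hlaplace
end

section
/- Let θ̂ be a random locally finite Borel measure on [0,∞) such that almost surely ∫_{[0,∞)} e^{-λx²} θ̂(dx) < ∞ for every λ > 0, and such that the family { s^{-3/2} · ∫_{[0,∞)} x e^{-√2·x} e^{-x²/(2s)} θ̂(dx) : s ≥ 1 } of real random variables is tight. Then s^{-5/2} · ∫_{[0,∞)} x² e^{-√2·x} e^{-x²/(4s)} θ̂(dx) → 0 in probability as s → ∞. -/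
/-!
Splitting `e^{-x²/(4s)} = e^{-x²/(8s)} · e^{-x²/(2·4s)}` and using `x e^{-x²/(8s)} ≤ √(8s)` bounds
the `x²`-integral at scale `s` by `√(8s)` times the `x`-integral at scale `4s`. After normalisation
the variable at time `s` is at most a constant times `s^{-1/2}` times a member of the tight family,
hence tends to `0` in probability. The Gaussian moment hypothesis makes the `x`-integrand
integrable, so its Bochner integral is the true one.
-/

open MeasureTheory Filter Set

noncomputable section

open Real

lemma mul_exp_neg_sq_div_le_sqrt (x : ℝ) {c : ℝ} (hc : 0 < c) :
    x * exp (-(x ^ 2 / c)) ≤ √c := by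
  have hsqrt : 0 < √c := sqrt_pos.2 hc
  have h : x / √c ≤ exp (x ^ 2 / c) := by
    have hv : (x / √c) ^ 2 = x ^ 2 / c := by rw [div_pow, sq_sqrt hc.le]
    nlinarith [add_one_le_exp (x ^ 2 / c), sq_nonneg (2 * (x / √c) - 1)]
  rw [exp_neg, ← div_eq_mul_inv, div_le_iff₀ (exp_pos _), mul_comm]
  rwa [div_le_iff₀ hsqrt] at h

lemma integrableOn_Ici_of_abs_le_mul_exp_neg_mul_sq {μ : Measure ℝ} {f : ℝ → ℝ}
    (hf : Continuous f) {l C : ℝ}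
    (hμ : ∫⁻ x in Ici 0, ENNReal.ofReal (exp (-l * x ^ 2)) ∂μ < ⊤)
    (hbound : ∀ x ∈ Ici (0 : ℝ), |f x| ≤ C * exp (-l * x ^ 2)) :
    IntegrableOn f (Ici 0) μ := by
  have hexp : IntegrableOn (fun x => exp (-l * x ^ 2)) (Ici 0) μ :=
    ⟨by fun_prop, (hasFiniteIntegral_iff_ofReal (.of_forall fun _ => (exp_pos _).le)).2 hμ⟩
  exact (hexp.const_mul C).mono' hf.aestronglyMeasurable
    (ae_restrict_of_forall_mem measurableSet_Ici hbound)

lemma integrableOn_tiltedGaussian {μ : Measure ℝ} {t : ℝ} (ht : 0 < t)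
    (hμ : ∫⁻ x in Ici 0, ENNReal.ofReal (exp (-(1 / (4 * t)) * x ^ 2)) ∂μ < ⊤) :
    IntegrableOn (fun x => x * exp (-√2 * x) * exp (-x ^ 2 / (2 * t))) (Ici 0) μ := by
  refine integrableOn_Ici_of_abs_le_mul_exp_neg_mul_sq (C := √(4 * t)) (by fun_prop) hμ
    fun x (hx : 0 ≤ x) => ?_
  have hsplit :
      exp (-x ^ 2 / (2 * t)) = exp (-(x ^ 2 / (4 * t))) * exp (-(1 / (4 * t)) * x ^ 2) := by
    rw [← exp_add]; congr 1; field_simp; ring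
  have hdecay : exp (-√2 * x) ≤ 1 := exp_le_one_iff.2 (by nlinarith [sqrt_nonneg 2])
  rw [abs_of_nonneg (by positivity), hsplit]
  calc x * exp (-√2 * x) * (exp (-(x ^ 2 / (4 * t))) * exp (-(1 / (4 * t)) * x ^ 2))
      = (x * exp (-(x ^ 2 / (4 * t)))) * exp (-√2 * x) * exp (-(1 / (4 * t)) * x ^ 2) := by ring
    _ ≤ √(4 * t) * 1 * exp (-(1 / (4 * t)) * x ^ 2) := by
        gcongr
        · exact mul_exp_neg_sq_div_le_sqrt x (by positivity)
    _ = √(4 * t) * exp (-(1 / (4 * t)) * x ^ 2) := by ring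

lemma sq_tiltedGaussian_le {x s : ℝ} (hx : 0 ≤ x) (hs : 0 < s) :
    x ^ 2 * exp (-√2 * x) * exp (-x ^ 2 / (4 * s)) ≤
      √(8 * s) * (x * exp (-√2 * x) * exp (-x ^ 2 / (2 * (4 * s)))) := by
  have hsplit :
      exp (-x ^ 2 / (4 * s)) = exp (-(x ^ 2 / (8 * s))) * exp (-x ^ 2 / (2 * (4 * s))) := by
    rw [← exp_add]; congr 1; field_simp; ring
  calc x ^ 2 * exp (-√2 * x) * exp (-x ^ 2 / (4 * s))
      = (x * exp (-(x ^ 2 / (8 * s)))) *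
          (x * exp (-√2 * x) * exp (-x ^ 2 / (2 * (4 * s)))) := by
        rw [hsplit]; ring
    _ ≤ √(8 * s) * (x * exp (-√2 * x) * exp (-x ^ 2 / (2 * (4 * s)))) := by
        gcongr
        exact mul_exp_neg_sq_div_le_sqrt x (by positivity)

lemma setIntegral_sq_tiltedGaussian_le {μ : Measure ℝ} {s : ℝ} (hs : 0 < s)
    (hμ : ∫⁻ x in Ici 0, ENNReal.ofReal (exp (-(1 / (4 * (4 * s))) * x ^ 2)) ∂μ < ⊤) :
    ∫ x in Ici 0, x ^ 2 * exp (-√2 * x) * exp (-x ^ 2 / (4 * s)) ∂μ ≤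
      √(8 * s) * ∫ x in Ici 0, x * exp (-√2 * x) * exp (-x ^ 2 / (2 * (4 * s))) ∂μ := by
  rw [← integral_const_mul]
  refine integral_mono_of_nonneg ?_
    ((integrableOn_tiltedGaussian (by positivity) hμ).const_mul _) ?_
  · exact ae_restrict_of_forall_mem measurableSet_Ici fun x (hx : 0 ≤ x) => by positivity
  · exact ae_restrict_of_forall_mem measurableSet_Ici fun x hx => sq_tiltedGaussian_le hx hs

lemma rpow_mul_sqrt_mul_rpow_eq {s : ℝ} (hs : 0 < s) :
    s ^ (-(5 : ℝ) / 2) * √(8 * s) * (4 * s) ^ ((3 : ℝ) / 2) =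
      √8 * 4 ^ ((3 : ℝ) / 2) * s ^ (-(1 / 2 : ℝ)) := by
  rw [sqrt_mul (by norm_num), sqrt_eq_rpow s, mul_rpow (by norm_num) hs.le]
  calc s ^ (-(5 : ℝ) / 2) * (√8 * s ^ (1 / 2 : ℝ)) * (4 ^ ((3 : ℝ) / 2) * s ^ ((3 : ℝ) / 2))
      = √8 * 4 ^ ((3 : ℝ) / 2) *
          (s ^ (-(5 : ℝ) / 2) * s ^ (1 / 2 : ℝ) * s ^ ((3 : ℝ) / 2)) := by ring
    _ = √8 * 4 ^ ((3 : ℝ) / 2) * s ^ (-(1 / 2 : ℝ)) := by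
        rw [← rpow_add hs, ← rpow_add hs]; norm_num

lemma abs_rpow_mul_setIntegral_sq_tiltedGaussian_le {μ : Measure ℝ} {s : ℝ} (hs : 0 < s)
    (hμ : ∫⁻ x in Ici 0, ENNReal.ofReal (exp (-(1 / (4 * (4 * s))) * x ^ 2)) ∂μ < ⊤) :
    |s ^ (-(5 : ℝ) / 2) * ∫ x in Ici 0, x ^ 2 * exp (-√2 * x) * exp (-x ^ 2 / (4 * s)) ∂μ| ≤
      √8 * 4 ^ ((3 : ℝ) / 2) * s ^ (-(1 / 2 : ℝ)) *
        |(4 * s) ^ (-(3 : ℝ) / 2) *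
          ∫ x in Ici 0, x * exp (-√2 * x) * exp (-x ^ 2 / (2 * (4 * s))) ∂μ| := by
  have hf : 0 ≤ ∫ x in Ici 0, x ^ 2 * exp (-√2 * x) * exp (-x ^ 2 / (4 * s)) ∂μ :=
    setIntegral_nonneg measurableSet_Ici fun x _ => by positivity
  have hg : 0 ≤ ∫ x in Ici 0, x * exp (-√2 * x) * exp (-x ^ 2 / (2 * (4 * s))) ∂μ :=
    setIntegral_nonneg measurableSet_Ici fun x (hx : 0 ≤ x) => by positivity
  rw [abs_of_nonneg (by positivity), abs_of_nonneg (by positivity), ← rpow_mul_sqrt_mul_rpow_eq hs]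
  calc s ^ (-(5 : ℝ) / 2) * ∫ x in Ici 0, x ^ 2 * exp (-√2 * x) * exp (-x ^ 2 / (4 * s)) ∂μ
      ≤ s ^ (-(5 : ℝ) / 2) *
          (√(8 * s) * ∫ x in Ici 0, x * exp (-√2 * x) * exp (-x ^ 2 / (2 * (4 * s))) ∂μ) := by
        gcongr
        exact setIntegral_sq_tiltedGaussian_le hs hμ
    _ = s ^ (-(5 : ℝ) / 2) * √(8 * s) * (4 * s) ^ ((3 : ℝ) / 2) * ((4 * s) ^ (-(3 : ℝ) / 2) *
          ∫ x in Ici 0, x * exp (-√2 * x) * exp (-x ^ 2 / (2 * (4 * s))) ∂μ) := by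
        rw [mul_assoc _ ((4 * s) ^ ((3 : ℝ) / 2)), ← mul_assoc ((4 * s) ^ ((3 : ℝ) / 2)),
          ← rpow_add (by positivity)]
        norm_num [mul_assoc]

lemma convInProb_zero_of_ae_abs_le_mul_tight {Ω ι κ : Type*} [MeasurableSpace Ω]
    {P : Measure Ω} {l : Filter ι} {X : ι → Ω → ℝ} {Y : κ → Ω → ℝ} (hY : TightFamily P Y)
    {c : ι → ℝ} (hc : Tendsto c l (nhds 0))
    (hXY : ∀ᶠ i in l, ∃ k, ∀ᵐ ω ∂P, |X i ω| ≤ c i * |Y k ω|) :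
    ConvInProb P l X 0 := by
  intro ε hε
  rw [ENNReal.tendsto_nhds_zero]
  intro δ hδ
  obtain ⟨r, -, hr, hrδ⟩ := ENNReal.lt_iff_exists_real_btwn.1 hδ
  obtain ⟨M, hM⟩ := hY r (ENNReal.ofReal_pos.1 hr)
  have hM' : 0 < max M 0 + 1 := by positivity
  have hc_small : ∀ᶠ i in l, c i * (max M 0 + 1) < ε := by
    have := hc.eventually (gt_mem_nhds (div_pos hε hM'))
    exact this.mono fun i hi => (lt_div_iff₀ hM').1 hi
  filter_upwards [hXY, hc_small] with i ⟨k, hk⟩ hci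
  calc P {ω | ε < |X i ω - 0|} ≤ P {ω | M < |Y k ω|} := by
        refine measure_mono_ae (hk.mono fun ω hω (hεX : ε < |X i ω - 0|) => ?_)
        show M < |Y k ω|
        by_contra! hYM
        rw [sub_zero] at hεX
        nlinarith [le_max_left M 0, abs_nonneg (Y k ω)]
    _ ≤ ENNReal.ofReal r := hM k
    _ ≤ δ := hrδ.le

theorem I1_term_vanishes_general
    {Ω : Type*} [MeasurableSpace Ω] (P : Measure Ω)
    (θ : Ω → Measure ℝ)
    (hfin : ∀ᵐ ω ∂P, ∀ l : ℝ, 0 < l →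
      (∫⁻ x in Set.Ici (0:ℝ), ENNReal.ofReal (Real.exp (-l * x ^ 2)) ∂(θ ω)) < ⊤)
    (htight : TightFamily P (fun s : Set.Ici (1:ℝ) => fun ω =>
      (s : ℝ) ^ (-(3:ℝ)/2) * ∫ x in Set.Ici (0:ℝ),
        x * Real.exp (-(Real.sqrt 2) * x) * Real.exp (-x ^ 2 / (2 * (s:ℝ))) ∂(θ ω))) :
    ConvInProb P atTop
      (fun s ω => s ^ (-(5:ℝ)/2) * ∫ x in Set.Ici (0:ℝ),
        x ^ 2 * Real.exp (-(Real.sqrt 2) * x) * Real.exp (-x ^ 2 / (4 * s)) ∂(θ ω)) 0 := by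
  have hc : Tendsto (fun s : ℝ => √8 * 4 ^ ((3 : ℝ) / 2) * s ^ (-(1 / 2 : ℝ))) atTop (nhds 0) := by
    rw [← mul_zero (√8 * 4 ^ ((3 : ℝ) / 2))]
    exact (tendsto_rpow_neg_atTop (by norm_num)).const_mul _
  refine convInProb_zero_of_ae_abs_le_mul_tight htight hc ?_
  filter_upwards [eventually_ge_atTop 1] with s hs
  refine ⟨⟨4 * s, by simp only [mem_Ici]; linarith⟩, ?_⟩
  filter_upwards [hfin] with ω hω
  exact abs_rpow_mul_setIntegral_sq_tiltedGaussian_le (by linarith) (hω _ (by positivity))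

/-- Tightness of `s^{-3/2} ∫ x e^{-√2 x} e^{-x²/(2s)} θ̂(dx)` implies that
`s^{-5/2} ∫ x² e^{-√2 x} e^{-x²/(4s)} θ̂(dx) → 0` in probability as `s → ∞`. -/
theorem I1_term_vanishes
    {Ω : Type*} [MeasurableSpace Ω] (P : Measure Ω) [IsProbabilityMeasure P]
    (θ : Ω → Measure ℝ) (hmeas : Measurable θ)
    (hloc : ∀ ω, IsLocallyFiniteMeasure (θ ω))
    (hsupp : ∀ ω, θ ω (Set.Iio 0) = 0)
    (hfin : ∀ᵐ ω ∂P, ∀ l : ℝ, 0 < l →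
      (∫⁻ x in Set.Ici (0:ℝ), ENNReal.ofReal (Real.exp (-l * x ^ 2)) ∂(θ ω)) < ⊤)
    (htight : TightFamily P (fun s : Set.Ici (1:ℝ) => fun ω =>
      (s : ℝ) ^ (-(3:ℝ)/2) * ∫ x in Set.Ici (0:ℝ),
        x * Real.exp (-(Real.sqrt 2) * x) * Real.exp (-x ^ 2 / (2 * (s:ℝ))) ∂(θ ω))) :
    ConvInProb P atTop
      (fun s ω => s ^ (-(5:ℝ)/2) * ∫ x in Set.Ici (0:ℝ),
        x ^ 2 * Real.exp (-(Real.sqrt 2) * x) * Real.exp (-x ^ 2 / (4 * s)) ∂(θ ω)) 0 :=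
  I1_term_vanishes_general P θ hfin htight

end
end

section
/- Let θ̂ be a random locally finite Borel measure on [0,∞) such that almost surely ∫_{[0,∞)} e^{-λx²} θ̂(dx) < ∞ for every λ > 0, and such that the family { s^{-3/2} · ∫_{[0,∞)} x e^{-√2·x} e^{-x²/(2s)} θ̂(dx) : s ≥ 1 } of real random variables is tight. Then s^{-3/2} · ∫_{[0,∞)} x e^{-√2·x} e^{-x²/(2s)} · ( e^{x²/(2 s^{3/2})} − 1 ) θ̂(dx) → 0 in probability as s → ∞ (the integrals being taken for s > 1, where the integrand is nonnegative and the integral is almost surely finite). -/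
/-!
Write `g_s(x) = x e^{-√2 x} e^{-x²/(2s)}` and `Y_s = s^{-3/2} ∫ g_s dθ̂`, a tight family. For
`s = t⁴ ≥ 4` split at `x² = t⁵`: below it the correction factor `e^{x²/(2t⁶)} - 1` is at most
`e^{1/(2t)} - 1`, above it `e^{-x²/(2t⁴)} (e^{x²/(2t⁶)} - 1) ≤ e^{-t/8} e^{-x²/(8t⁴)}`. Hence the
term is at most `(e^{1/(2t)} - 1) Y_s + 8 e^{-t/8} Y_{4s}`, a tight family times coefficients
tending to `0`, which tends to `0` in probability.
-/
open MeasureTheory Filter Set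

noncomputable section

open Topology

namespace ConvInProb

variable {Ω ι : Type*} [MeasurableSpace Ω] {P : Measure Ω} {l : Filter ι} {X Y : ι → Ω → ℝ}

theorem add (hX : ConvInProb P l X 0) (hY : ConvInProb P l Y 0) :
    ConvInProb P l (fun i ω => X i ω + Y i ω) 0 := by
  intro ε hε
  have hsplit : ∀ i, P {ω | ε < |X i ω + Y i ω - 0|} ≤
      P {ω | ε / 2 < |X i ω - 0|} + P {ω | ε / 2 < |Y i ω - 0|} := fun i =>
    (measure_mono fun ω (hω : ε < |X i ω + Y i ω - 0|) => by
      by_contra! h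
      simp only [mem_union, mem_ofPred_eq, not_or, not_lt, sub_zero] at h hω
      linarith [abs_add_le (X i ω) (Y i ω)]).trans (measure_union_le _ _)
  refine tendsto_of_tendsto_of_tendsto_of_le_of_le tendsto_const_nhds ?_
    (fun _ => zero_le) hsplit
  simpa using (hX _ (half_pos hε)).add (hY _ (half_pos hε))

theorem of_abs_le (hY : ConvInProb P l Y 0) (hXY : ∀ᶠ i in l, ∀ᵐ ω ∂P, |X i ω| ≤ Y i ω) :
    ConvInProb P l X 0 := by
  intro ε hε
  refine tendsto_of_tendsto_of_tendsto_of_le_of_le' tendsto_const_nhds (hY ε hε)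
    (Eventually.of_forall fun _ => zero_le) (hXY.mono fun i hi => measure_mono_ae ?_)
  filter_upwards [hi] with ω hω hεω
  simp only [sub_zero] at hεω ⊢
  exact hεω.trans_le (hω.trans (le_abs_self _))

end ConvInProb

theorem TightFamily.convInProb_mul {Ω ι κ : Type*} [MeasurableSpace Ω] {P : Measure Ω}
    {l : Filter ι} {Y : κ → Ω → ℝ} (hY : TightFamily P Y) {c : ι → ℝ}
    (hc : Tendsto c l (𝓝 0)) (φ : ι → κ) :
    ConvInProb P l (fun i ω => c i * Y (φ i) ω) 0 := by
  intro ε hε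
  rw [ENNReal.tendsto_nhds_zero]
  intro η hη
  obtain ⟨r, -, hr, hrη⟩ := ENNReal.lt_iff_exists_real_btwn.1 hη
  obtain ⟨M, hM⟩ := hY r (ENNReal.ofReal_pos.1 hr)
  have hM₁ : 0 < max M 1 := lt_max_of_lt_right one_pos
  filter_upwards [Metric.tendsto_nhds.1 hc (ε / max M 1) (div_pos hε hM₁)] with i hi
  refine (measure_mono fun ω (hω : ε < |c i * Y (φ i) ω - 0|) => ?_).trans
    ((hM (φ i)).trans hrη.le)
  rw [Real.dist_eq, sub_zero, lt_div_iff₀ hM₁] at hi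
  rw [sub_zero, abs_mul] at hω
  by_contra! h
  simp only [mem_ofPred_eq, not_lt] at h
  have := mul_le_mul_of_nonneg_left (h.trans (le_max_left M 1)) (abs_nonneg (c i))
  linarith

theorem mul_exp_neg_sqrt_two_mul_le_one {x : ℝ} (hx : 0 ≤ x) :
    x * Real.exp (-Real.sqrt 2 * x) ≤ 1 := by
  have hsqrt : 1 ≤ Real.sqrt 2 := Real.one_le_sqrt.2 one_le_two
  rw [neg_mul, Real.exp_neg, ← div_eq_mul_inv, div_le_one (Real.exp_pos _)]
  nlinarith [Real.add_one_le_exp (Real.sqrt 2 * x)]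

def weight (s x : ℝ) : ℝ := x * Real.exp (-Real.sqrt 2 * x) * Real.exp (-x ^ 2 / (2 * s))

theorem weight_nonneg (s : ℝ) {x : ℝ} (hx : 0 ≤ x) : 0 ≤ weight s x := by
  unfold weight; positivity

theorem weight_le_exp (s : ℝ) {x : ℝ} (hx : 0 ≤ x) :
    weight s x ≤ Real.exp (-(1 / (2 * s)) * x ^ 2) := by
  rw [show -(1 / (2 * s)) * x ^ 2 = -x ^ 2 / (2 * s) by ring]
  exact mul_le_of_le_one_left (Real.exp_pos _).le (mul_exp_neg_sqrt_two_mul_le_one hx)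

theorem continuous_weight (s : ℝ) : Continuous (weight s) := by
  unfold weight; fun_prop

theorem integrableOn_exp_neg_mul_sq_Ici {μ : Measure ℝ} {l : ℝ}
    (hμ : ∫⁻ x in Ici (0:ℝ), ENNReal.ofReal (Real.exp (-l * x ^ 2)) ∂μ < ⊤) :
    IntegrableOn (fun x => Real.exp (-l * x ^ 2)) (Ici 0) μ :=
  ⟨by fun_prop, (hasFiniteIntegral_iff_ofReal
    (Eventually.of_forall fun _ => (Real.exp_pos _).le)).2 hμ⟩

theorem integrableOn_weight {μ : Measure ℝ}
    (hμ : ∀ l : ℝ, 0 < l → ∫⁻ x in Ici (0:ℝ), ENNReal.ofReal (Real.exp (-l * x ^ 2)) ∂μ < ⊤)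
    {s : ℝ} (hs : 0 < s) : IntegrableOn (weight s) (Ici 0) μ := by
  refine (integrableOn_exp_neg_mul_sq_Ici (hμ _ (by positivity : 0 < 1 / (2 * s)))).mono'
    (continuous_weight s).aestronglyMeasurable ?_
  filter_upwards [ae_restrict_mem measurableSet_Ici] with x (hx : 0 ≤ x)
  rw [Real.norm_of_nonneg (weight_nonneg s hx)]
  exact weight_le_exp s hx

theorem exp_mul_exp_sub_one_le {t : ℝ} (ht : 0 < t) (ht2 : 2 ≤ t ^ 2) (x : ℝ) :
    Real.exp (-x ^ 2 / (2 * t ^ 4)) * (Real.exp (x ^ 2 / (2 * t ^ 6)) - 1) ≤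
      (Real.exp (1 / (2 * t)) - 1) * Real.exp (-x ^ 2 / (2 * t ^ 4)) +
        Real.exp (-t / 8) * Real.exp (-x ^ 2 / (2 * (4 * t ^ 4))) := by
  have hE := Real.exp_pos (-x ^ 2 / (2 * t ^ 4))
  have hcorr : 0 ≤ Real.exp (x ^ 2 / (2 * t ^ 6)) - 1 :=
    sub_nonneg.2 (Real.one_le_exp (by positivity))
  rcases le_or_gt (x ^ 2) (t ^ 5) with hsmall | hlarge
  · have h : Real.exp (x ^ 2 / (2 * t ^ 6)) ≤ Real.exp (1 / (2 * t)) := by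
      refine Real.exp_le_exp.2 ((div_le_div_iff₀ (by positivity) (by positivity)).2 ?_)
      nlinarith [pow_pos ht 5]
    nlinarith [Real.exp_pos (-t / 8), Real.exp_pos (-x ^ 2 / (2 * (4 * t ^ 4)))]
  · have h : -x ^ 2 / (2 * t ^ 4) + x ^ 2 / (2 * t ^ 6) ≤
        -t / 8 + -x ^ 2 / (2 * (4 * t ^ 4)) := by
      have hfrac : -x ^ 2 / (2 * t ^ 4) + x ^ 2 / (2 * t ^ 6) -
          (-t / 8 + -x ^ 2 / (2 * (4 * t ^ 4)))
          = (t ^ 7 + 4 * x ^ 2 - 3 * x ^ 2 * t ^ 2) / (8 * t ^ 6) := by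
        field_simp; ring
      have hnum : t ^ 7 + 4 * x ^ 2 - 3 * x ^ 2 * t ^ 2 ≤ 0 := by nlinarith [sq_nonneg x]
      have := div_nonpos_of_nonpos_of_nonneg hnum (by positivity : (0:ℝ) ≤ 8 * t ^ 6)
      linarith
    have := Real.exp_le_exp.2 h
    rw [Real.exp_add, Real.exp_add] at this
    nlinarith [mul_nonneg hE.le hcorr, Real.one_le_exp (show 0 ≤ 1 / (2 * t) by positivity)]

theorem weight_mul_exp_sub_one_le {s : ℝ} (hs : 4 ≤ s) {x : ℝ} (hx : 0 ≤ x) :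
    weight s x * (Real.exp (x ^ 2 / (2 * s ^ ((3:ℝ)/2))) - 1) ≤
      (Real.exp (1 / (2 * s ^ ((1:ℝ)/4))) - 1) * weight s x +
        Real.exp (-s ^ ((1:ℝ)/4) / 8) * weight (4 * s) x := by
  have hs0 : 0 ≤ s := by linarith
  set t := s ^ ((1:ℝ)/4) with ht_def
  have ht : 0 < t := Real.rpow_pos_of_pos (by linarith) _
  have ht4 : s = t ^ 4 := by
    rw [ht_def, ← Real.rpow_natCast, ← Real.rpow_mul hs0]; norm_num
  have ht6 : s ^ ((3:ℝ)/2) = t ^ 6 := by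
    rw [ht_def, ← Real.rpow_natCast, ← Real.rpow_mul hs0]; norm_num
  have ht2 : 2 ≤ t ^ 2 := by nlinarith [sq_nonneg (t ^ 2)]
  rw [ht6]
  clear_value t
  subst ht4
  have hxe : 0 ≤ x * Real.exp (-Real.sqrt 2 * x) := by positivity
  have key := mul_le_mul_of_nonneg_left (exp_mul_exp_sub_one_le ht ht2 x) hxe
  unfold weight
  linarith

theorem weight_mul_exp_sub_one_nonneg {s : ℝ} (hs : 0 ≤ s) {x : ℝ} (hx : 0 ≤ x) :
    0 ≤ weight s x * (Real.exp (x ^ 2 / (2 * s ^ ((3:ℝ)/2))) - 1) :=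
  mul_nonneg (weight_nonneg s hx)
    (sub_nonneg.2 (Real.one_le_exp (by have := Real.rpow_nonneg hs ((3:ℝ)/2); positivity)))

theorem setIntegral_weight_mul_exp_sub_one_le {μ : Measure ℝ}
    (hμ : ∀ l : ℝ, 0 < l → ∫⁻ x in Ici (0:ℝ), ENNReal.ofReal (Real.exp (-l * x ^ 2)) ∂μ < ⊤)
    {s : ℝ} (hs : 4 ≤ s) :
    ∫ x in Ici 0, weight s x * (Real.exp (x ^ 2 / (2 * s ^ ((3:ℝ)/2))) - 1) ∂μ ≤
      (Real.exp (1 / (2 * s ^ ((1:ℝ)/4))) - 1) * ∫ x in Ici 0, weight s x ∂μ +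
        Real.exp (-s ^ ((1:ℝ)/4) / 8) * ∫ x in Ici 0, weight (4 * s) x ∂μ := by
  have hg := (integrableOn_weight hμ (by linarith : 0 < s)).const_mul
    (Real.exp (1 / (2 * s ^ ((1:ℝ)/4))) - 1)
  have hg₄ := (integrableOn_weight hμ (by linarith : 0 < 4 * s)).const_mul
    (Real.exp (-s ^ ((1:ℝ)/4) / 8))
  have hf : IntegrableOn (fun x => weight s x * (Real.exp (x ^ 2 / (2 * s ^ ((3:ℝ)/2))) - 1))
      (Ici 0) μ := by
    refine (hg.add hg₄).mono' (by unfold weight; fun_prop) ?_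
    filter_upwards [ae_restrict_mem measurableSet_Ici] with x (hx : 0 ≤ x)
    rw [Real.norm_of_nonneg (weight_mul_exp_sub_one_nonneg (by linarith) hx)]
    exact weight_mul_exp_sub_one_le hs hx
  rw [← integral_const_mul, ← integral_const_mul, ← integral_add hg hg₄]
  exact setIntegral_mono_on hf (hg.add hg₄) measurableSet_Ici
    fun x hx => weight_mul_exp_sub_one_le hs hx

theorem four_mul_rpow_neg_three_halves {s : ℝ} (hs : 0 ≤ s) :
    (4 * s) ^ (-(3:ℝ)/2) = s ^ (-(3:ℝ)/2) / 8 := by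
  rw [Real.mul_rpow (by norm_num) hs, show (4:ℝ) = 2 ^ (2:ℝ) by norm_num,
    ← Real.rpow_mul (by norm_num)]
  norm_num
  ring

theorem abs_rpow_mul_setIntegral_weight_mul_exp_sub_one_le {μ : Measure ℝ}
    (hμ : ∀ l : ℝ, 0 < l → ∫⁻ x in Ici (0:ℝ), ENNReal.ofReal (Real.exp (-l * x ^ 2)) ∂μ < ⊤)
    {s : ℝ} (hs : 4 ≤ s) :
    |s ^ (-(3:ℝ)/2) *
        ∫ x in Ici 0, weight s x * (Real.exp (x ^ 2 / (2 * s ^ ((3:ℝ)/2))) - 1) ∂μ|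
      ≤ (Real.exp (1 / (2 * s ^ ((1:ℝ)/4))) - 1) *
          (s ^ (-(3:ℝ)/2) * ∫ x in Ici 0, weight s x ∂μ) +
        8 * Real.exp (-s ^ ((1:ℝ)/4) / 8) *
          ((4 * s) ^ (-(3:ℝ)/2) * ∫ x in Ici 0, weight (4 * s) x ∂μ) := by
  have hs0 : 0 ≤ s := by linarith
  have hpow := Real.rpow_nonneg hs0 (-(3:ℝ)/2)
  rw [abs_of_nonneg (mul_nonneg hpow (setIntegral_nonneg measurableSet_Ici
    fun x hx => weight_mul_exp_sub_one_nonneg hs0 hx)), four_mul_rpow_neg_three_halves hs0]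
  have := mul_le_mul_of_nonneg_left (setIntegral_weight_mul_exp_sub_one_le hμ hs) hpow
  linarith

theorem I4_term_vanishes_general
    {Ω : Type*} [MeasurableSpace Ω] (P : Measure Ω)
    (θ : Ω → Measure ℝ)
    (hfin : ∀ᵐ ω ∂P, ∀ l : ℝ, 0 < l →
      (∫⁻ x in Set.Ici (0:ℝ), ENNReal.ofReal (Real.exp (-l * x ^ 2)) ∂(θ ω)) < ⊤)
    (htight : TightFamily P (fun s : Set.Ici (1:ℝ) => fun ω =>
      (s : ℝ) ^ (-(3:ℝ)/2) * ∫ x in Set.Ici (0:ℝ),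
        x * Real.exp (-(Real.sqrt 2) * x) * Real.exp (-x ^ 2 / (2 * (s:ℝ))) ∂(θ ω))) :
    ConvInProb P atTop
      (fun s ω => s ^ (-(3:ℝ)/2) * ∫ x in Set.Ici (0:ℝ),
        x * Real.exp (-(Real.sqrt 2) * x) * Real.exp (-x ^ 2 / (2 * s)) *
          (Real.exp (x ^ 2 / (2 * s ^ ((3:ℝ)/2))) - 1) ∂(θ ω)) 0 := by
  let φ : ℝ → Ici (1:ℝ) := fun s => ⟨max s 1, le_max_right s 1⟩
  have hroot : Tendsto (fun s : ℝ => s ^ ((1:ℝ)/4)) atTop atTop :=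
    tendsto_rpow_atTop (by norm_num)
  have ha : Tendsto (fun s : ℝ => Real.exp (1 / (2 * s ^ ((1:ℝ)/4))) - 1) atTop (𝓝 0) := by
    have h := (Real.continuous_exp.tendsto 0).comp
      (hroot.const_mul_atTop two_pos).inv_tendsto_atTop
    simpa [Function.comp_def, one_div] using h.sub_const 1
  have hb : Tendsto (fun s : ℝ => 8 * Real.exp (-s ^ ((1:ℝ)/4) / 8)) atTop (𝓝 0) := by
    have h := (tendsto_neg_atTop_atBot.comp hroot).atBot_div_const (by norm_num : (0:ℝ) < 8)
    simpa using (Real.tendsto_exp_atBot.comp h).const_mul 8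
  refine ((htight.convInProb_mul ha φ).add
    (htight.convInProb_mul hb (fun s => φ (4 * s)))).of_abs_le ?_
  filter_upwards [eventually_ge_atTop 4] with s hs
  filter_upwards [hfin] with ω hω
  have hφ : ∀ {r : ℝ}, 1 ≤ r → (φ r : ℝ) = r := fun h => max_eq_left h
  rw [hφ (by linarith), hφ (by linarith)]
  exact abs_rpow_mul_setIntegral_weight_mul_exp_sub_one_le hω hs

/-- Tightness of `s^{-3/2} ∫ x e^{-√2 x} e^{-x²/(2s)} θ̂(dx)` implies that
`s^{-3/2} ∫ x e^{-√2 x} e^{-x²/(2s)} (e^{x²/(2 s^{3/2})} − 1) θ̂(dx) → 0`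
in probability as `s → ∞`. -/
theorem I4_term_vanishes
    {Ω : Type*} [MeasurableSpace Ω] (P : Measure Ω) [IsProbabilityMeasure P]
    (θ : Ω → Measure ℝ) (hmeas : Measurable θ)
    (hloc : ∀ ω, IsLocallyFiniteMeasure (θ ω))
    (hsupp : ∀ ω, θ ω (Set.Iio 0) = 0)
    (hfin : ∀ᵐ ω ∂P, ∀ l : ℝ, 0 < l →
      (∫⁻ x in Set.Ici (0:ℝ), ENNReal.ofReal (Real.exp (-l * x ^ 2)) ∂(θ ω)) < ⊤)
    (htight : TightFamily P (fun s : Set.Ici (1:ℝ) => fun ω =>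
      (s : ℝ) ^ (-(3:ℝ)/2) * ∫ x in Set.Ici (0:ℝ),
        x * Real.exp (-(Real.sqrt 2) * x) * Real.exp (-x ^ 2 / (2 * (s:ℝ))) ∂(θ ω))) :
    ConvInProb P atTop
      (fun s ω => s ^ (-(3:ℝ)/2) * ∫ x in Set.Ici (0:ℝ),
        x * Real.exp (-(Real.sqrt 2) * x) * Real.exp (-x ^ 2 / (2 * s)) *
          (Real.exp (x ^ 2 / (2 * s ^ ((3:ℝ)/2))) - 1) ∂(θ ω)) 0 :=
  I4_term_vanishes_general P θ hfin htight
end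
end

section
/- For every β ∈ (0,1], the Cesàro averages of cos(x^β) vanish: lim_{t→∞} (1/t) · ∫_1^t cos(x^β) dx = 0. -/
/-!
Since `cos (x ^ β) = (x ^ (1 - β) / β) * (sin (x ^ β))'`, integrating by parts against the weight
`x ^ (1 - β) / β`, which is nondecreasing exactly when `β ≤ 1`, bounds `∫_1^t cos (x ^ β)` by
`2 t ^ (1 - β) / β = o(t)`.
-/

open MeasureTheory Filter Set

theorem abs_integral_mul_deriv_le_of_deriv_nonneg {a b M : ℝ} {u u' v v' : ℝ → ℝ} (hab : a ≤ b)
    (hu : ∀ x ∈ Icc a b, HasDerivAt u (u' x) x) (hv : ∀ x ∈ Icc a b, HasDerivAt v (v' x) x)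
    (hu' : IntervalIntegrable u' volume a b) (hv' : IntervalIntegrable v' volume a b)
    (hu'_nonneg : ∀ x ∈ Icc a b, 0 ≤ u' x) (hua : 0 ≤ u a) (hvM : ∀ x ∈ Icc a b, |v x| ≤ M) :
    |∫ x in a..b, u x * v' x| ≤ 2 * M * u b := by
  rw [← uIcc_of_le hab] at hu hv
  have hu_ftc : ∫ x in a..b, u' x = u b - u a :=
    intervalIntegral.integral_eq_sub_of_hasDerivAt hu hu'
  have hub : u a ≤ u b := by
    rw [← sub_nonneg, ← hu_ftc]
    exact intervalIntegral.integral_nonneg hab hu'_nonneg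
  have h_rem : |∫ x in a..b, u' x * v x| ≤ M * (u b - u a) := by
    rw [← hu_ftc, ← intervalIntegral.integral_const_mul M u', ← Real.norm_eq_abs]
    refine intervalIntegral.norm_integral_le_of_norm_le hab (ae_of_all _ fun x hx => ?_)
      (hu'.const_mul M)
    have hx := Ioc_subset_Icc_self hx
    rw [Real.norm_eq_abs, abs_mul, abs_of_nonneg (hu'_nonneg x hx), mul_comm]
    exact mul_le_mul_of_nonneg_right (hvM x hx) (hu'_nonneg x hx)
  have hvb := hvM b (right_mem_Icc.2 hab)
  have hva := hvM a (left_mem_Icc.2 hab)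
  rw [intervalIntegral.integral_mul_deriv_eq_deriv_mul hu hv hu' hv']
  calc |u b * v b - u a * v a - ∫ x in a..b, u' x * v x|
      ≤ |u b| * |v b| + |u a| * |v a| + |∫ x in a..b, u' x * v x| := by
        rw [← abs_mul, ← abs_mul]
        exact (abs_sub _ _).trans (add_le_add_left (abs_sub _ _) _)
    _ ≤ u b * M + u a * M + M * (u b - u a) := by
        rw [abs_of_nonneg hua, abs_of_nonneg (hua.trans hub)]
        gcongr
        exact hua.trans hub
    _ = 2 * M * u b := by ring

theorem abs_integral_cos_rpow_le {β a t : ℝ} (hβ0 : 0 < β) (hβ1 : β ≤ 1) (ha : 0 < a)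
    (hat : a ≤ t) : |∫ x in a..t, Real.cos (x ^ β)| ≤ 2 / β * t ^ (1 - β) := by
  have hpos : ∀ x ∈ Icc a t, 0 < x := fun x hx => ha.trans_le hx.1
  have hu : ∀ x ∈ Icc a t,
      HasDerivAt (fun y => y ^ (1 - β) / β) ((1 - β) * x ^ (1 - β - 1) / β) x :=
    fun x hx => (Real.hasDerivAt_rpow_const (Or.inl (hpos x hx).ne')).div_const β
  have hv : ∀ x ∈ Icc a t,
      HasDerivAt (fun y => Real.sin (y ^ β)) (Real.cos (x ^ β) * (β * x ^ (β - 1))) x :=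
    fun x hx => (Real.hasDerivAt_rpow_const (Or.inl (hpos x hx).ne')).sin
  have hu' : IntervalIntegrable (fun x => (1 - β) * x ^ (1 - β - 1) / β) volume a t := by
    refine ContinuousOn.intervalIntegrable_of_Icc hat fun x hx =>
      ContinuousAt.continuousWithinAt ?_
    fun_prop (disch := exact Or.inl (hpos x hx).ne')
  have hv' : IntervalIntegrable (fun x => Real.cos (x ^ β) * (β * x ^ (β - 1))) volume a t := by
    refine ContinuousOn.intervalIntegrable_of_Icc hat fun x hx =>
      ContinuousAt.continuousWithinAt ?_
    fun_prop (disch := exact Or.inl (hpos x hx).ne')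
  have h_eq : ∫ x in a..t, Real.cos (x ^ β)
      = ∫ x in a..t, x ^ (1 - β) / β * (Real.cos (x ^ β) * (β * x ^ (β - 1))) := by
    refine intervalIntegral.integral_congr fun x hx => ?_
    rw [uIcc_of_le hat] at hx
    have hx1 : x ^ (1 - β) * x ^ (β - 1) = 1 := by
      rw [← Real.rpow_add (hpos x hx)]; norm_num
    calc Real.cos (x ^ β) = Real.cos (x ^ β) * (x ^ (1 - β) * x ^ (β - 1)) * (β / β) := by
          rw [hx1, div_self hβ0.ne', mul_one, mul_one]
      _ = _ := by ring
  have h_bound := abs_integral_mul_deriv_le_of_deriv_nonneg hat hu hv hu' hv'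
    (fun x hx => div_nonneg (mul_nonneg (by linarith) (Real.rpow_nonneg (hpos x hx).le _)) hβ0.le)
    (by positivity) (fun x _ => Real.abs_sin_le_one _)
  rw [h_eq]
  convert h_bound using 1
  ring

/-- For every `β ∈ (0,1]`, the Cesàro averages of `cos(x^β)` vanish:
`(1/t) ∫_{[1,t]} cos(x^β) dx → 0` as `t → ∞`. -/
theorem cesaro_average_cos_rpow_vanishes
    (β : ℝ) (hβ : β ∈ Set.Ioc (0:ℝ) 1) :
    Tendsto (fun t : ℝ => (1 / t) * ∫ x in Set.Icc (1:ℝ) t, Real.cos (x ^ β))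
      atTop (nhds 0) := by
  obtain ⟨hβ0, hβ1⟩ := hβ
  have h_lim := (tendsto_rpow_neg_atTop hβ0).const_mul (2 / β)
  rw [mul_zero] at h_lim
  refine squeeze_zero_norm' ?_ h_lim
  filter_upwards [eventually_ge_atTop 1] with t ht
  have ht0 : 0 < t := one_pos.trans_le ht
  rw [integral_Icc_eq_integral_Ioc, ← intervalIntegral.integral_of_le ht, norm_mul,
    Real.norm_eq_abs, Real.norm_eq_abs, abs_of_pos (one_div_pos.2 ht0)]
  calc 1 / t * |∫ x in (1:ℝ)..t, Real.cos (x ^ β)| ≤ 1 / t * (2 / β * t ^ (1 - β)) := by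
        gcongr
        exact abs_integral_cos_rpow_le hβ0 hβ1 one_pos ht
    _ = 2 / β * t ^ (-β) := by
        rw [Real.rpow_sub ht0, Real.rpow_one, Real.rpow_neg ht0.le]
        field_simp
end
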